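/- arXiv:2101.07351 — 6 statements merged into one kernel-verified Lean document; each statement's English description precedes it below -/
import Mathlib

section
/- Let H be a complex Hilbert space and ι a countable index set. Let {f_i}_{i∈ι} be a frame for H with optimal lower frame bound A_F and synthesis operator T_F : ℓ²(ι) → H, and let T : H → H be a bounded linear operator. If ‖(Id − T) ∘ T_F‖ < √A_F, then {f_i}_{i∈ι} and {T f_i}_{i∈ι} form a woven pair: there exist constants A, B > 0 such that for every subset σ ⊆ ι and every x ∈ H, A‖x‖² ≤ ∑_{i∉σ} |⟪x, f_i⟫|² + ∑_{i∈σ} |⟪x, T f_i⟫|² ≤ B‖x‖². -/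
local notation "⟪" x ", " y "⟫" => @inner ℂ _ _ x y

set_option maxHeartbeats 1000000 in
/-- If `f` is a frame for a complex Hilbert space `H` with optimal lower frame bound `AF`
and synthesis operator `TF`, and `T : H → H` is a bounded operator with
`‖(Id − T) ∘ TF‖ < √AF`, then `f` and `T f` form a woven pair. -/
theorem woven_of_operator_perturbation
    {H : Type*} [NormedAddCommGroup H] [InnerProductSpace ℂ H] [CompleteSpace H]
    {ι : Type*} [Countable ι] [DecidableEq ι]
    (f : ι → H) (AF BF : ℝ) (hAF : 0 < AF) (hBF : 0 < BF)
    (hlow : ∀ x : H, AF * ‖x‖ ^ 2 ≤ ∑' i : ι, ‖⟪x, f i⟫‖ ^ 2)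
    (hopt : ∀ A' : ℝ, (∀ x : H, A' * ‖x‖ ^ 2 ≤ ∑' i : ι, ‖⟪x, f i⟫‖ ^ 2) → A' ≤ AF)
    (hBesselF : ∀ x : H, (∑' i : ι, ‖⟪x, f i⟫‖ ^ 2) ≤ BF * ‖x‖ ^ 2)
    (TF : lp (fun _ : ι => ℂ) 2 →L[ℂ] H)
    (hTF : ∀ i : ι, TF (lp.single 2 i (1 : ℂ)) = f i)
    (T : H →L[ℂ] H)
    (hpert : ‖(ContinuousLinearMap.id ℂ H - T).comp TF‖ < Real.sqrt AF) :
    ∃ A B : ℝ, 0 < A ∧ 0 < B ∧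
      ∀ (σ : Set ι) (x : H),
        A * ‖x‖ ^ 2 ≤
            (∑' i : {j : ι // j ∉ σ}, ‖⟪x, f (i : ι)⟫‖ ^ 2) +
              ∑' i : {j : ι // j ∈ σ}, ‖⟪x, T (f (i : ι))⟫‖ ^ 2 ∧
          (∑' i : {j : ι // j ∉ σ}, ‖⟪x, f (i : ι)⟫‖ ^ 2) +
              (∑' i : {j : ι // j ∈ σ}, ‖⟪x, T (f (i : ι))⟫‖ ^ 2) ≤ B * ‖x‖ ^ 2 := by
  classical
  set D := (ContinuousLinearMap.id ℂ H - T).comp TF with hDdef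
  -- basic facts about ℓ² norms
  have h2 : (0 : ℝ) < (2 : ENNReal).toReal := by norm_num
  have sumg : ∀ g : lp (fun _ : ι => ℂ) 2, Summable fun i => ‖g i‖ ^ 2 := by
    intro g
    have := (lp.memℓp g).summable h2
    simpa [ENNReal.toReal_ofNat, Real.rpow_natCast] using this
  have normg : ∀ g : lp (fun _ : ι => ℂ) 2, ‖g‖ ^ 2 = ∑' i, ‖g i‖ ^ 2 := by
    intro g
    have := lp.norm_rpow_eq_tsum h2 g
    have h2' : ((2 : ENNReal).toReal) = ((2 : ℕ) : ℝ) := by norm_num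
    rw [h2'] at this
    simpa [Real.rpow_natCast] using this
  -- adjoint coordinates
  have hadj : ∀ (S : lp (fun _ : ι => ℂ) 2 →L[ℂ] H) (x : H) (i : ι),
      (ContinuousLinearMap.adjoint S x) i = ⟪S (lp.single 2 i (1 : ℂ)), x⟫ := by
    intro S x i
    have h1 := ContinuousLinearMap.adjoint_inner_right S (lp.single 2 i (1 : ℂ)) x
    rw [lp.inner_single_left] at h1
    simpa using h1
  have hεpos : 0 < Real.sqrt AF - ‖D‖ := sub_pos.2 hpert
  refine ⟨(Real.sqrt AF - ‖D‖) ^ 2, (Real.sqrt BF + ‖D‖) ^ 2, pow_pos hεpos 2, ?_, ?_⟩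
  · have : 0 < Real.sqrt BF + ‖D‖ := by
      have := Real.sqrt_pos.2 hBF
      positivity
    positivity
  intro σ x
  set v : lp (fun _ : ι => ℂ) 2 := ContinuousLinearMap.adjoint TF x with hvdef
  set u : lp (fun _ : ι => ℂ) 2 := ContinuousLinearMap.adjoint D x with hudef
  have hv : ∀ i, v i = ⟪f i, x⟫ := by
    intro i; rw [hvdef, hadj, hTF]
  have hu : ∀ i, u i = ⟪f i - T (f i), x⟫ := by
    intro i
    rw [hudef, hadj]
    congr 1
    simp [hDdef, hTF i]
  -- the indicator of σ applied to u, as an element of ℓ²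
  have hbmem : Memℓp (σ.indicator (⇑u)) 2 := by
    apply memℓp_gen
    apply Summable.of_nonneg_of_le (fun i => by positivity)
      (fun i => ?_) ((lp.memℓp u).summable h2)
    refine Real.rpow_le_rpow (norm_nonneg _) ?_ ENNReal.toReal_nonneg
    by_cases h : i ∈ σ
    · simp [Set.indicator_of_mem h]
    · simp [Set.indicator_of_notMem h]
  set b : lp (fun _ : ι => ℂ) 2 := ⟨σ.indicator (⇑u), hbmem⟩ with hbdef
  have hb : ∀ i, b i = σ.indicator (⇑u) i := fun i => rfl
  set a : lp (fun _ : ι => ℂ) 2 := v - b with hadef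
  have ha : ∀ i, a i = v i - b i := by
    intro i; rw [hadef, lp.coeFn_sub]; rfl
  have ha_mem : ∀ i ∈ σ, ‖a i‖ = ‖⟪x, T (f i)⟫‖ := by
    intro i hi
    rw [ha, hb, Set.indicator_of_mem hi, hv, hu, inner_sub_left, ← norm_inner_symm]
    ring_nf
  have ha_not : ∀ i, i ∉ σ → ‖a i‖ = ‖⟪x, f i⟫‖ := by
    intro i hi
    rw [ha, hb, Set.indicator_of_notMem hi, hv, sub_zero, ← norm_inner_symm]
  -- the woven sum equals ‖a‖²
  have hsa := sumg a
  have split : (∑' i : σ, ‖a (i : ι)‖ ^ 2) + (∑' i : ↥(σᶜ), ‖a (i : ι)‖ ^ 2)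
      = ∑' i, ‖a i‖ ^ 2 :=
    Summable.tsum_add_tsum_compl (hsa.subtype σ) (hsa.subtype σᶜ)
  have e1 : (∑' i : {j : ι // j ∉ σ}, ‖⟪x, f (i : ι)⟫‖ ^ 2)
      = ∑' i : ↥(σᶜ), ‖a (i : ι)‖ ^ 2 :=
    tsum_congr fun i => by rw [ha_not i i.2]
  have e2 : (∑' i : {j : ι // j ∈ σ}, ‖⟪x, T (f (i : ι))⟫‖ ^ 2)
      = ∑' i : σ, ‖a (i : ι)‖ ^ 2 :=
    tsum_congr fun i => by rw [ha_mem i i.2]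
  have eqsum : (∑' i : {j : ι // j ∉ σ}, ‖⟪x, f (i : ι)⟫‖ ^ 2) +
      (∑' i : {j : ι // j ∈ σ}, ‖⟪x, T (f (i : ι))⟫‖ ^ 2) = ‖a‖ ^ 2 := by
    rw [e1, e2, normg a, ← split]; ring
  -- norm estimates
  have hvlow : Real.sqrt AF * ‖x‖ ≤ ‖v‖ := by
    have h1 : AF * ‖x‖ ^ 2 ≤ ‖v‖ ^ 2 := by
      rw [normg v]
      refine (hlow x).trans_eq (tsum_congr fun i => ?_)
      rw [hv, ← norm_inner_symm]
    have h2 : Real.sqrt (AF * ‖x‖ ^ 2) ≤ Real.sqrt (‖v‖ ^ 2) := Real.sqrt_le_sqrt h1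
    rwa [Real.sqrt_mul hAF.le, Real.sqrt_sq (norm_nonneg _),
      Real.sqrt_sq (norm_nonneg _)] at h2
  have hvhigh : ‖v‖ ≤ Real.sqrt BF * ‖x‖ := by
    have h1 : ‖v‖ ^ 2 ≤ BF * ‖x‖ ^ 2 := by
      rw [normg v]
      refine le_trans (le_of_eq (tsum_congr fun i => ?_)) (hBesselF x)
      rw [hv, ← norm_inner_symm]
    have h2 : Real.sqrt (‖v‖ ^ 2) ≤ Real.sqrt (BF * ‖x‖ ^ 2) := Real.sqrt_le_sqrt h1
    rwa [Real.sqrt_mul hBF.le, Real.sqrt_sq (norm_nonneg _),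
      Real.sqrt_sq (norm_nonneg _)] at h2
  have hunorm : ‖u‖ ≤ ‖D‖ * ‖x‖ := by
    have h1 : ‖u‖ ≤ ‖ContinuousLinearMap.adjoint D‖ * ‖x‖ :=
      (ContinuousLinearMap.adjoint D).le_opNorm x
    rwa [LinearIsometryEquiv.norm_map] at h1
  have hbu : ‖b‖ ≤ ‖u‖ := by
    have h1 : ‖b‖ ^ 2 ≤ ‖u‖ ^ 2 := by
      rw [normg b, normg u]
      refine Summable.tsum_le_tsum (fun i => ?_) (sumg b) (sumg u)
      rw [hb]
      refine pow_le_pow_left₀ (norm_nonneg _) ?_ 2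
      by_cases h : i ∈ σ
      · simp [Set.indicator_of_mem h]
      · simp [Set.indicator_of_notMem h]
    have h2 : Real.sqrt (‖b‖ ^ 2) ≤ Real.sqrt (‖u‖ ^ 2) := Real.sqrt_le_sqrt h1
    rwa [Real.sqrt_sq (norm_nonneg _), Real.sqrt_sq (norm_nonneg _)] at h2
  have hbD : ‖b‖ ≤ ‖D‖ * ‖x‖ := hbu.trans hunorm
  constructor
  · -- lower bound
    have halow : (Real.sqrt AF - ‖D‖) * ‖x‖ ≤ ‖a‖ := by
      have hveq : v = a + b := by rw [hadef]; abel
      have htri : ‖v‖ ≤ ‖a‖ + ‖b‖ := by rw [hveq]; exact norm_add_le _ _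
      linarith [hvlow, hbD, htri]
    have h0 : 0 ≤ (Real.sqrt AF - ‖D‖) * ‖x‖ := by positivity
    calc (Real.sqrt AF - ‖D‖) ^ 2 * ‖x‖ ^ 2
        = ((Real.sqrt AF - ‖D‖) * ‖x‖) ^ 2 := by ring
      _ ≤ ‖a‖ ^ 2 := pow_le_pow_left₀ h0 halow 2
      _ = _ := eqsum.symm
  · -- upper bound
    have hahigh : ‖a‖ ≤ (Real.sqrt BF + ‖D‖) * ‖x‖ := by
      have htri : ‖a‖ ≤ ‖v‖ + ‖b‖ := by rw [hadef]; exact norm_sub_le _ _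
      linarith [hvhigh, hbD, htri]
    calc (∑' i : {j : ι // j ∉ σ}, ‖⟪x, f (i : ι)⟫‖ ^ 2) +
        (∑' i : {j : ι // j ∈ σ}, ‖⟪x, T (f (i : ι))⟫‖ ^ 2)
        = ‖a‖ ^ 2 := eqsum
      _ ≤ ((Real.sqrt BF + ‖D‖) * ‖x‖) ^ 2 :=
          pow_le_pow_left₀ (norm_nonneg _) hahigh 2
      _ = (Real.sqrt BF + ‖D‖) ^ 2 * ‖x‖ ^ 2 := by ring
end

section
/- Let H be a complex Hilbert space and ι a countable index set. Let {f_i}_{i∈ι} and {g_i}_{i∈ι} be frames for H with Bessel bounds B_F and B_G respectively, and suppose ({f_i}, {g_i}) is a woven pair with uniform lower frame constant C > 0 (i.e., C‖x‖² ≤ ∑_{i∉σ}|⟪x, f_i⟫|² + ∑_{i∈σ}|⟪x, g_i⟫|² for every σ ⊆ ι and x ∈ H). Let U, V : H → H be invertible bounded linear operators such that ‖U⁻¹V − Id‖² < C/B_G or ‖V⁻¹U − Id‖² < C/B_F. Then {U f_i}_{i∈ι} and {V g_i}_{i∈ι} form a woven pair: there exist constants A', B' > 0 such that for every σ ⊆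 ι and x ∈ H, A'‖x‖² ≤ ∑_{i∉σ}|⟪x, U f_i⟫|² + ∑_{i∈σ}|⟪x, V g_i⟫|² ≤ B'‖x‖². -/
local notation "⟪" x ", " y "⟫" => @inner ℂ _ _ x y

private lemma sq_norm_sub_le {E : Type*} [SeminormedAddCommGroup E] (a b : E) {t : ℝ}
    (ht : 0 < t) : ‖a - b‖ ^ 2 ≤ (1 + t) * ‖a‖ ^ 2 + (1 + 1 / t) * ‖b‖ ^ 2 := by
  have h := norm_sub_le a b
  have key : 2 * ‖a‖ * ‖b‖ ≤ t * ‖a‖ ^ 2 + (1 / t) * ‖b‖ ^ 2 := by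
    rw [← sub_nonneg]
    have : t * ‖a‖ ^ 2 + (1 / t) * ‖b‖ ^ 2 - 2 * ‖a‖ * ‖b‖ = (t * ‖a‖ - ‖b‖) ^ 2 / t := by
      field_simp; ring
    rw [this]; positivity
  nlinarith [norm_nonneg a, norm_nonneg b, norm_nonneg (a - b), sq_nonneg (‖a‖ + ‖b‖)]

private lemma arith_woven (C D SF SG SG' SD N : ℝ) (hC : 0 < C) (hD0 : 0 ≤ D) (hD : D < C)
    (hW : C * N ≤ SF + SG)
    (hSGle : SG ≤ (1 + (C + D) / (C - D)) * SG' + (1 + 1 / ((C + D) / (C - D))) * SD)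
    (hSD : SD ≤ D * N) (hSF : 0 ≤ SF) :
    (C - D) ^ 2 / (2 * (C + D)) * N ≤ SF + SG' := by
  have hu : 0 < C - D := by linarith
  have hv : 0 < C + D := by linarith
  rw [div_mul_eq_mul_div, div_le_iff₀ (by positivity)]
  have h1 : 1 + (C + D) / (C - D) = 2 * C / (C - D) := by field_simp; ring
  have h2 : 1 + 1 / ((C + D) / (C - D)) = 2 * C / (C + D) := by
    rw [one_div_div]; field_simp; ring
  rw [h1, h2] at hSGle
  have h3 : (C - D) * (C + D) * SG ≤ 2 * C * (C + D) * SG' + 2 * C * (C - D) * SD := by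
    have h := mul_le_mul_of_nonneg_left hSGle (mul_pos hu hv).le
    have e : (C - D) * (C + D) * (2 * C / (C - D) * SG' + 2 * C / (C + D) * SD)
        = 2 * C * (C + D) * SG' + 2 * C * (C - D) * SD := by
      field_simp
    rw [e] at h
    exact h
  have P1 := mul_le_mul_of_nonneg_left hW (mul_pos hu hv).le
  have P2 := mul_le_mul_of_nonneg_left hSD (by positivity : (0:ℝ) ≤ 2 * C * (C - D))
  have P3 : 0 ≤ (C + D) * (C + D) * SF := by positivity
  have hbig : C * ((C - D) ^ 2 * N) ≤ C * ((SF + SG') * (2 * (C + D))) := by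
    nlinarith [P1, h3, P2, P3]
  exact le_of_mul_le_mul_left hbig hC

private lemma summable_of_frame {H : Type*} [NormedAddCommGroup H] [InnerProductSpace ℂ H]
    {ι : Type*} (g : ι → H) (A : ℝ) (hA : 0 < A)
    (hframe : ∀ x : H, A * ‖x‖ ^ 2 ≤ (∑' i : ι, ‖⟪x, g i⟫‖ ^ 2)) (x : H) :
    Summable fun i : ι => ‖⟪x, g i⟫‖ ^ 2 := by
  rcases eq_or_ne x 0 with rfl | hx
  · simp only [inner_zero_left, norm_zero]
    norm_num
  · by_contra hns
    have h0 : (∑' i : ι, ‖⟪x, g i⟫‖ ^ 2) = 0 := tsum_eq_zero_of_not_summable hns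
    have h1 := hframe x
    rw [h0] at h1
    have hxn : 0 < ‖x‖ := norm_pos_iff.mpr hx
    nlinarith [mul_pos hA (pow_pos hxn 2)]

private lemma aux_woven {H : Type*} [NormedAddCommGroup H] [InnerProductSpace ℂ H]
    [CompleteSpace H] {ι : Type*} [Countable ι]
    (f g : ι → H) (BF BG C : ℝ)
    (hBF : 0 < BF) (hBG : 0 < BG) (hC : 0 < C)
    (hsumF : ∀ x : H, Summable fun i : ι => ‖⟪x, f i⟫‖ ^ 2)
    (hsumG : ∀ x : H, Summable fun i : ι => ‖⟪x, g i⟫‖ ^ 2)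
    (hF : ∀ x : H, (∑' i : ι, ‖⟪x, f i⟫‖ ^ 2) ≤ BF * ‖x‖ ^ 2)
    (hG : ∀ x : H, (∑' i : ι, ‖⟪x, g i⟫‖ ^ 2) ≤ BG * ‖x‖ ^ 2)
    (hwoven : ∀ (σ : Set ι) (x : H),
      C * ‖x‖ ^ 2 ≤
        (∑' i : {j : ι // j ∉ σ}, ‖⟪x, f (i : ι)⟫‖ ^ 2) +
          ∑' i : {j : ι // j ∈ σ}, ‖⟪x, g (i : ι)⟫‖ ^ 2)
    (U V : H ≃L[ℂ] H)
    (hpert : ‖(U.symm : H →L[ℂ] H).comp (V : H →L[ℂ] H) - 1‖ ^ 2 < C / BG) :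
    ∃ A' B' : ℝ, 0 < A' ∧ 0 < B' ∧
      ∀ (σ : Set ι) (x : H),
        A' * ‖x‖ ^ 2 ≤
            (∑' i : {j : ι // j ∉ σ}, ‖⟪x, U (f (i : ι))⟫‖ ^ 2) +
              ∑' i : {j : ι // j ∈ σ}, ‖⟪x, V (g (i : ι))⟫‖ ^ 2 ∧
          (∑' i : {j : ι // j ∉ σ}, ‖⟪x, U (f (i : ι))⟫‖ ^ 2) +
              (∑' i : {j : ι // j ∈ σ}, ‖⟪x, V (g (i : ι))⟫‖ ^ 2) ≤ B' * ‖x‖ ^ 2 := by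
  classical
  set T : H →L[ℂ] H := (U.symm : H →L[ℂ] H).comp (V : H →L[ℂ] H) with hTdef
  set R : H →L[ℂ] H := T - 1 with hRdef
  set D : ℝ := BG * ‖R‖ ^ 2 with hDdef
  have hD0 : 0 ≤ D := by positivity
  have hD : D < C := by
    have h := (lt_div_iff₀ hBG).mp hpert
    rw [hDdef, mul_comm]
    exact h
  set A₀ : ℝ := (C - D) ^ 2 / (2 * (C + D)) with hA₀def
  have hA₀ : 0 < A₀ := by
    rw [hA₀def]
    have h1 : 0 < C - D := by linarith
    have h2 : 0 < C + D := by linarith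
    positivity
  -- adjoints
  set Ua : H →L[ℂ] H := ContinuousLinearMap.adjoint (U : H →L[ℂ] H) with hUa
  set Va : H →L[ℂ] H := ContinuousLinearMap.adjoint (V : H →L[ℂ] H) with hVa
  set Ta : H →L[ℂ] H := ContinuousLinearMap.adjoint T with hTa
  set Ra : H →L[ℂ] H := ContinuousLinearMap.adjoint R with hRa
  set Sa : H →L[ℂ] H := ContinuousLinearMap.adjoint (U.symm : H →L[ℂ] H) with hSa
  have hnormRa : ‖Ra‖ = ‖R‖ := ContinuousLinearMap.adjoint.norm_map R
  have hSaUa : ∀ z : H, Sa (Ua z) = z := by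
    intro z
    apply ext_inner_right ℂ
    intro w
    rw [hSa, hUa, ContinuousLinearMap.adjoint_inner_left, ContinuousLinearMap.adjoint_inner_left]
    simp
  have hTg : ∀ z : H, T z = z + R z := by
    intro z
    rw [hRdef]
    simp
  -- key lower estimate for the pair (f, T ∘ g)
  have key : ∀ (σ : Set ι) (y : H),
      A₀ * ‖y‖ ^ 2 ≤
        (∑' i : {j : ι // j ∉ σ}, ‖⟪y, f (i : ι)⟫‖ ^ 2) +
          ∑' i : {j : ι // j ∈ σ}, ‖⟪y, T (g (i : ι))⟫‖ ^ 2 := by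
    intro σ y
    have hu : 0 < C - D := by linarith
    have hv : 0 < C + D := by linarith
    have ht : 0 < (C + D) / (C - D) := by positivity
    set SF : ℝ := ∑' i : {j : ι // j ∉ σ}, ‖⟪y, f (i : ι)⟫‖ ^ 2 with hSF
    set SG : ℝ := ∑' i : {j : ι // j ∈ σ}, ‖⟪y, g (i : ι)⟫‖ ^ 2 with hSG
    set SG' : ℝ := ∑' i : {j : ι // j ∈ σ}, ‖⟪y, T (g (i : ι))⟫‖ ^ 2 with hSG'
    set SD : ℝ := ∑' i : {j : ι // j ∈ σ}, ‖⟪y, R (g (i : ι))⟫‖ ^ 2 with hSD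
    have hTrw : ∀ i : ι, ‖⟪y, T (g i)⟫‖ ^ 2 = ‖⟪Ta y, g i⟫‖ ^ 2 := by
      intro i; rw [hTa, ContinuousLinearMap.adjoint_inner_left]
    have hRrw : ∀ i : ι, ‖⟪y, R (g i)⟫‖ ^ 2 = ‖⟪Ra y, g i⟫‖ ^ 2 := by
      intro i; rw [hRa, ContinuousLinearMap.adjoint_inner_left]
    have sumG' : Summable fun i : {j : ι // j ∈ σ} => ‖⟪y, T (g (i : ι))⟫‖ ^ 2 := by
      have he : (fun i : {j : ι // j ∈ σ} => ‖⟪y, T (g (i : ι))⟫‖ ^ 2)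
          = fun i : {j : ι // j ∈ σ} => ‖⟪Ta y, g (i : ι)⟫‖ ^ 2 := funext fun i => hTrw i
      rw [he]
      exact (hsumG (Ta y)).subtype _
    have sumD : Summable fun i : {j : ι // j ∈ σ} => ‖⟪y, R (g (i : ι))⟫‖ ^ 2 := by
      have he : (fun i : {j : ι // j ∈ σ} => ‖⟪y, R (g (i : ι))⟫‖ ^ 2)
          = fun i : {j : ι // j ∈ σ} => ‖⟪Ra y, g (i : ι)⟫‖ ^ 2 := funext fun i => hRrw i
      rw [he]
      exact (hsumG (Ra y)).subtype _
    have sumG : Summable fun i : {j : ι // j ∈ σ} => ‖⟪y, g (i : ι)⟫‖ ^ 2 :=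
      (hsumG y).subtype _
    have pw : ∀ i : {j : ι // j ∈ σ},
        ‖⟪y, g (i : ι)⟫‖ ^ 2 ≤
          (1 + (C + D) / (C - D)) * ‖⟪y, T (g (i : ι))⟫‖ ^ 2 +
            (1 + 1 / ((C + D) / (C - D))) * ‖⟪y, R (g (i : ι))⟫‖ ^ 2 := by
      intro i
      have hsplit : ⟪y, g (i : ι)⟫ = ⟪y, T (g (i : ι))⟫ - ⟪y, R (g (i : ι))⟫ := by
        rw [hTg (g (i : ι)), inner_add_right]
        ring
      rw [hsplit]
      exact sq_norm_sub_le _ _ ht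
    have hSGle : SG ≤ (1 + (C + D) / (C - D)) * SG' + (1 + 1 / ((C + D) / (C - D))) * SD := by
      calc SG ≤ ∑' i : {j : ι // j ∈ σ},
            ((1 + (C + D) / (C - D)) * ‖⟪y, T (g (i : ι))⟫‖ ^ 2 +
              (1 + 1 / ((C + D) / (C - D))) * ‖⟪y, R (g (i : ι))⟫‖ ^ 2) :=
              Summable.tsum_le_tsum pw sumG ((sumG'.mul_left _).add (sumD.mul_left _))
        _ = (1 + (C + D) / (C - D)) * SG' + (1 + 1 / ((C + D) / (C - D))) * SD := by
            rw [Summable.tsum_add (sumG'.mul_left _) (sumD.mul_left _), tsum_mul_left, tsum_mul_left]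
    have hSDle : SD ≤ D * ‖y‖ ^ 2 := by
      have h1 : SD = ∑' i : {j : ι // j ∈ σ}, ‖⟪Ra y, g (i : ι)⟫‖ ^ 2 := by
        rw [hSD]; exact tsum_congr fun i => hRrw i
      have h2 : (∑' i : {j : ι // j ∈ σ}, ‖⟪Ra y, g (i : ι)⟫‖ ^ 2)
          ≤ ∑' i : ι, ‖⟪Ra y, g i⟫‖ ^ 2 :=
        Summable.tsum_subtype_le _ _ (fun i => by positivity) (hsumG (Ra y))
      have h3 : (∑' i : ι, ‖⟪Ra y, g i⟫‖ ^ 2) ≤ BG * ‖Ra y‖ ^ 2 := hG (Ra y)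
      have h4 : ‖Ra y‖ ≤ ‖R‖ * ‖y‖ := by
        calc ‖Ra y‖ ≤ ‖Ra‖ * ‖y‖ := Ra.le_opNorm y
          _ = ‖R‖ * ‖y‖ := by rw [hnormRa]
      have h4sq : ‖Ra y‖ ^ 2 ≤ (‖R‖ * ‖y‖) ^ 2 :=
        pow_le_pow_left₀ (norm_nonneg _) h4 2
      have h5 : BG * ‖Ra y‖ ^ 2 ≤ D * ‖y‖ ^ 2 := by
        rw [hDdef]
        calc BG * ‖Ra y‖ ^ 2 ≤ BG * (‖R‖ * ‖y‖) ^ 2 :=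
              mul_le_mul_of_nonneg_left h4sq hBG.le
          _ = BG * ‖R‖ ^ 2 * ‖y‖ ^ 2 := by ring
      linarith
    have hW : C * ‖y‖ ^ 2 ≤ SF + SG := hwoven σ y
    have hSFnn : 0 ≤ SF := tsum_nonneg fun i => by positivity
    rw [hA₀def]
    exact arith_woven C D SF SG SG' SD (‖y‖ ^ 2) hC hD0 hD hW hSGle hSDle hSFnn
  -- now transport by U
  have hApos : 0 < A₀ / (‖Sa‖ ^ 2 + 1) := div_pos hA₀ (by positivity)
  have hBpos : 0 < BF * ‖Ua‖ ^ 2 + BG * ‖Va‖ ^ 2 + 1 := by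
    have hb1 : 0 ≤ BF * ‖Ua‖ ^ 2 := mul_nonneg hBF.le (sq_nonneg _)
    have hb2 : 0 ≤ BG * ‖Va‖ ^ 2 := mul_nonneg hBG.le (sq_nonneg _)
    linarith
  refine ⟨A₀ / (‖Sa‖ ^ 2 + 1), BF * ‖Ua‖ ^ 2 + BG * ‖Va‖ ^ 2 + 1, hApos, hBpos,
    fun σ x => ?_⟩
  set y : H := Ua x with hy
  have hVgU : ∀ i : ι, V (g i) = U (T (g i)) := by
    intro i
    rw [hTdef]
    simp
  have hf_eq : (∑' i : {j : ι // j ∉ σ}, ‖⟪x, U (f (i : ι))⟫‖ ^ 2)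
      = ∑' i : {j : ι // j ∉ σ}, ‖⟪y, f (i : ι)⟫‖ ^ 2 := by
    refine tsum_congr fun i => ?_
    rw [hy, hUa, ContinuousLinearMap.adjoint_inner_left]
    simp
  have hg_eq : (∑' i : {j : ι // j ∈ σ}, ‖⟪x, V (g (i : ι))⟫‖ ^ 2)
      = ∑' i : {j : ι // j ∈ σ}, ‖⟪y, T (g (i : ι))⟫‖ ^ 2 := by
    refine tsum_congr fun i => ?_
    rw [hVgU, hy, hUa, ContinuousLinearMap.adjoint_inner_left]
    simp
  have hxy : ‖x‖ ^ 2 ≤ (‖Sa‖ ^ 2 + 1) * ‖y‖ ^ 2 := by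
    have h1 : ‖x‖ ≤ ‖Sa‖ * ‖y‖ := by
      conv_lhs => rw [← hSaUa x]
      exact Sa.le_opNorm y
    nlinarith [norm_nonneg x, norm_nonneg y, norm_nonneg Sa]
  constructor
  · rw [hf_eq, hg_eq]
    have h2 := key σ y
    have h3 : A₀ / (‖Sa‖ ^ 2 + 1) * ‖x‖ ^ 2 ≤ A₀ * ‖y‖ ^ 2 := by
      rw [div_mul_eq_mul_div, div_le_iff₀ (by positivity)]
      calc A₀ * ‖x‖ ^ 2 ≤ A₀ * ((‖Sa‖ ^ 2 + 1) * ‖y‖ ^ 2) :=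
            mul_le_mul_of_nonneg_left hxy hA₀.le
        _ = A₀ * ‖y‖ ^ 2 * (‖Sa‖ ^ 2 + 1) := by ring
    linarith
  · -- upper bound
    have hup1 : (∑' i : {j : ι // j ∉ σ}, ‖⟪x, U (f (i : ι))⟫‖ ^ 2)
        ≤ BF * ‖Ua‖ ^ 2 * ‖x‖ ^ 2 := by
      rw [hf_eq]
      have h1 : (∑' i : {j : ι // j ∉ σ}, ‖⟪y, f (i : ι)⟫‖ ^ 2) ≤ ∑' i : ι, ‖⟪y, f i⟫‖ ^ 2 :=
        Summable.tsum_subtype_le _ _ (fun i => by positivity) (hsumF y)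
      have h2 : (∑' i : ι, ‖⟪y, f i⟫‖ ^ 2) ≤ BF * ‖y‖ ^ 2 := hF y
      have h3 : ‖y‖ ≤ ‖Ua‖ * ‖x‖ := Ua.le_opNorm x
      have h3sq : ‖y‖ ^ 2 ≤ (‖Ua‖ * ‖x‖) ^ 2 := pow_le_pow_left₀ (norm_nonneg _) h3 2
      have h4 : BF * ‖y‖ ^ 2 ≤ BF * ‖Ua‖ ^ 2 * ‖x‖ ^ 2 := by
        calc BF * ‖y‖ ^ 2 ≤ BF * (‖Ua‖ * ‖x‖) ^ 2 := mul_le_mul_of_nonneg_left h3sq hBF.le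
          _ = BF * ‖Ua‖ ^ 2 * ‖x‖ ^ 2 := by ring
      linarith
    have hup2 : (∑' i : {j : ι // j ∈ σ}, ‖⟪x, V (g (i : ι))⟫‖ ^ 2)
        ≤ BG * ‖Va‖ ^ 2 * ‖x‖ ^ 2 := by
      have heq : (∑' i : {j : ι // j ∈ σ}, ‖⟪x, V (g (i : ι))⟫‖ ^ 2)
          = ∑' i : {j : ι // j ∈ σ}, ‖⟪Va x, g (i : ι)⟫‖ ^ 2 := by
        refine tsum_congr fun i => ?_
        rw [hVa, ContinuousLinearMap.adjoint_inner_left]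
        simp
      rw [heq]
      have h1 : (∑' i : {j : ι // j ∈ σ}, ‖⟪Va x, g (i : ι)⟫‖ ^ 2)
          ≤ ∑' i : ι, ‖⟪Va x, g i⟫‖ ^ 2 :=
        Summable.tsum_subtype_le _ _ (fun i => by positivity) (hsumG (Va x))
      have h2 : (∑' i : ι, ‖⟪Va x, g i⟫‖ ^ 2) ≤ BG * ‖Va x‖ ^ 2 := hG (Va x)
      have h3 : ‖Va x‖ ≤ ‖Va‖ * ‖x‖ := Va.le_opNorm x
      have h3sq : ‖Va x‖ ^ 2 ≤ (‖Va‖ * ‖x‖) ^ 2 := pow_le_pow_left₀ (norm_nonneg _) h3 2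
      have h4 : BG * ‖Va x‖ ^ 2 ≤ BG * ‖Va‖ ^ 2 * ‖x‖ ^ 2 := by
        calc BG * ‖Va x‖ ^ 2 ≤ BG * (‖Va‖ * ‖x‖) ^ 2 := mul_le_mul_of_nonneg_left h3sq hBG.le
          _ = BG * ‖Va‖ ^ 2 * ‖x‖ ^ 2 := by ring
      linarith
    have hxnn : (0:ℝ) ≤ ‖x‖ ^ 2 := by positivity
    nlinarith

/-- **Perturbation of a woven pair by invertible operators.**
If `(f, g)` is a woven pair of frames with uniform lower frame constant `C > 0` and Bessel
bounds `BF`, `BG`, and `U, V` are invertible bounded operators on `H` with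
`‖U⁻¹V − Id‖² < C / BG` or `‖V⁻¹U − Id‖² < C / BF`, then `(U f, V g)` is a woven pair. -/
theorem woven_of_invertible_perturbation
    {H : Type*} [NormedAddCommGroup H] [InnerProductSpace ℂ H] [CompleteSpace H]
    {ι : Type*} [Countable ι]
    (f g : ι → H) (AF BF AG BG C : ℝ)
    (hAF : 0 < AF) (hBF : 0 < BF) (hAG : 0 < AG) (hBG : 0 < BG) (hC : 0 < C)
    (hframeF : ∀ x : H, AF * ‖x‖ ^ 2 ≤ (∑' i : ι, ‖⟪x, f i⟫‖ ^ 2) ∧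
      (∑' i : ι, ‖⟪x, f i⟫‖ ^ 2) ≤ BF * ‖x‖ ^ 2)
    (hframeG : ∀ x : H, AG * ‖x‖ ^ 2 ≤ (∑' i : ι, ‖⟪x, g i⟫‖ ^ 2) ∧
      (∑' i : ι, ‖⟪x, g i⟫‖ ^ 2) ≤ BG * ‖x‖ ^ 2)
    (hwoven : ∀ (σ : Set ι) (x : H),
      C * ‖x‖ ^ 2 ≤
        (∑' i : {j : ι // j ∉ σ}, ‖⟪x, f (i : ι)⟫‖ ^ 2) +
          ∑' i : {j : ι // j ∈ σ}, ‖⟪x, g (i : ι)⟫‖ ^ 2)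
    (U V : H ≃L[ℂ] H)
    (hpert : ‖(U.symm : H →L[ℂ] H).comp (V : H →L[ℂ] H) - 1‖ ^ 2 < C / BG ∨
      ‖(V.symm : H →L[ℂ] H).comp (U : H →L[ℂ] H) - 1‖ ^ 2 < C / BF) :
    ∃ A' B' : ℝ, 0 < A' ∧ 0 < B' ∧
      ∀ (σ : Set ι) (x : H),
        A' * ‖x‖ ^ 2 ≤
            (∑' i : {j : ι // j ∉ σ}, ‖⟪x, U (f (i : ι))⟫‖ ^ 2) +
              ∑' i : {j : ι // j ∈ σ}, ‖⟪x, V (g (i : ι))⟫‖ ^ 2 ∧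
          (∑' i : {j : ι // j ∉ σ}, ‖⟪x, U (f (i : ι))⟫‖ ^ 2) +
              (∑' i : {j : ι // j ∈ σ}, ‖⟪x, V (g (i : ι))⟫‖ ^ 2) ≤ B' * ‖x‖ ^ 2 := by
  classical
  have hsumF : ∀ x : H, Summable fun i : ι => ‖⟪x, f i⟫‖ ^ 2 :=
    summable_of_frame f AF hAF (fun x => (hframeF x).1)
  have hsumG : ∀ x : H, Summable fun i : ι => ‖⟪x, g i⟫‖ ^ 2 :=
    summable_of_frame g AG hAG (fun x => (hframeG x).1)
  have compl_eq1 : ∀ (σ : Set ι) (F : ι → ℝ),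
      (∑' i : {j : ι // j ∉ σᶜ}, F (i : ι)) = ∑' i : {j : ι // j ∈ σ}, F (i : ι) := by
    intro σ F
    exact tsum_congr_set_coe _ (by ext j; exact not_not)
  have compl_eq2 : ∀ (σ : Set ι) (F : ι → ℝ),
      (∑' i : {j : ι // j ∈ σᶜ}, F (i : ι)) = ∑' i : {j : ι // j ∉ σ}, F (i : ι) := by
    intro σ F
    exact tsum_congr_set_coe _ (by ext j; exact Iff.rfl)
  rcases hpert with h | h
  · exact aux_woven f g BF BG C hBF hBG hC hsumF hsumG (fun x => (hframeF x).2)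
      (fun x => (hframeG x).2) hwoven U V h
  · have hwoven' : ∀ (σ : Set ι) (x : H),
        C * ‖x‖ ^ 2 ≤
          (∑' i : {j : ι // j ∉ σ}, ‖⟪x, g (i : ι)⟫‖ ^ 2) +
            ∑' i : {j : ι // j ∈ σ}, ‖⟪x, f (i : ι)⟫‖ ^ 2 := by
      intro σ x
      have hw := hwoven σᶜ x
      rw [compl_eq1 σ (fun i => ‖⟪x, f i⟫‖ ^ 2), compl_eq2 σ (fun i => ‖⟪x, g i⟫‖ ^ 2)] at hw
      linarith
    obtain ⟨A', B', hA', hB', hsw⟩ := aux_woven g f BG BF C hBG hBF hC hsumG hsumF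
      (fun x => (hframeG x).2) (fun x => (hframeF x).2) hwoven' V U h
    refine ⟨A', B', hA', hB', fun σ x => ?_⟩
    have hw := hsw σᶜ x
    rw [compl_eq1 σ (fun i => ‖⟪x, V (g i)⟫‖ ^ 2),
      compl_eq2 σ (fun i => ‖⟪x, U (f i)⟫‖ ^ 2)] at hw
    exact ⟨by linarith [hw.1], by linarith [hw.2]⟩
end

section
/- Let H be a complex Hilbert space and ι a countable index set. Let {f_i}_{i∈ι} and {g_i}_{i∈ι} be frames for H with Bessel bounds B_F and B_G, with frame operators S_F and S_G (both positive and invertible), and suppose ({f_i}, {g_i}) is a woven pair with uniform lower frame constant C > 0. If ‖S_F⁻¹ − S_G⁻¹‖² < C · max{ 1/(B_G B_F²), 1/(B_F B_G²) }, then the canonical dual frames {S_F⁻¹ f_i}_{i∈ι} and {S_G⁻¹ g_i}_{i∈ι} form a woven pair: there exist constants A', B' > 0 such that for every σ ⊆ ι and x ∈ H, A'‖x‖² ≤ ∑_{i∉σ}|⟪x, S_F⁻¹ f_i⟫|² + ∑_{i∈σ}|⟪x, S_G⁻¹ g_i⟫|² ≤ B'‖x‖². -/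
/-!
Write `U = (SF⁻¹)†` and `V = (SG⁻¹)†`, so that `⟪x, SF⁻¹ f i⟫ = ⟪U x, f i⟫`, and put
`d = ‖SF⁻¹ - SG⁻¹‖ = ‖U - V‖`. The frame operator satisfies `0 ≤ SF ≤ BF` in the Loewner order,
so `‖SF‖ ≤ BF`, and `SF† U = 1` gives `‖x‖ ≤ BF ‖U x‖`; likewise `‖x‖ ≤ BG ‖V x‖`.

Apply the weaving inequality of `(f, g)` at `V x` and, on the `f`-part, trade `V x` for `U x`:
by `(a + b)² ≤ (1 + t) a² + (1 + t⁻¹) b²` and the Bessel bound of `f` this costs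
`(1 + t⁻¹) BF d² ‖x‖²`. Hence
`(C / BG² - (1 + t⁻¹) BF d²) ‖x‖² ≤ (1 + t) · (weaving sum of the duals at x)`,
and the bracket is positive for large `t` as soon as `BF d² < C / BG²`. The other half of the
`max` is the same argument with `f` and `g` exchanged (and `σ` replaced by its complement).
The upper bound is the Bessel bound transported through `SF⁻¹` and `SG⁻¹`.
-/

local notation "⟪" x ", " y "⟫" => @inner ℂ _ _ x y

open Filter Topology

lemma add_sq_le_one_add_mul_sq_add {a b t : ℝ} (ht : 0 < t) :
    (a + b) ^ 2 ≤ (1 + t) * a ^ 2 + (1 + t⁻¹) * b ^ 2 := by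
  have hgap : (1 + t) * a ^ 2 + (1 + t⁻¹) * b ^ 2 - (a + b) ^ 2 = (t * a - b) ^ 2 / t := by
    field_simp
    ring
  have : 0 ≤ (t * a - b) ^ 2 / t := by positivity
  linarith

lemma exists_pos_one_add_inv_mul_lt {p q : ℝ} (h : q < p) : ∃ t > 0, (1 + t⁻¹) * q < p := by
  have hlim : Tendsto (fun t : ℝ => (1 + t⁻¹) * q) atTop (𝓝 ((1 + 0) * q)) :=
    (tendsto_const_nhds.add tendsto_inv_atTop_zero).mul_const q
  rw [add_zero, one_mul] at hlim
  obtain ⟨t, hlt, ht⟩ := ((hlim.eventually (gt_mem_nhds h)).and (eventually_gt_atTop 0)).exists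
  exact ⟨t, ht, hlt⟩

section Bessel

variable {H : Type*} [NormedAddCommGroup H] [InnerProductSpace ℂ H] {ι : Type*} {f : ι → H}

lemma summable_of_frame_lower_bound {A : ℝ} (hA : 0 < A)
    (hlow : ∀ x : H, A * ‖x‖ ^ 2 ≤ ∑' i, ‖⟪x, f i⟫‖ ^ 2) (x : H) :
    Summable fun i => ‖⟪x, f i⟫‖ ^ 2 := by
  by_contra hx
  have hx0 : x = 0 := by
    have h := hlow x
    rw [tsum_eq_zero_of_not_summable hx] at h
    simpa using nonpos_of_mul_nonpos_right h hA
  exact hx (by simp [hx0])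

variable {B : ℝ} (hsum : ∀ x : H, Summable fun i => ‖⟪x, f i⟫‖ ^ 2)
  (hub : ∀ x : H, ∑' i, ‖⟪x, f i⟫‖ ^ 2 ≤ B * ‖x‖ ^ 2)
include hsum hub

lemma tsum_subtype_le_of_bessel (p : ι → Prop) (x : H) :
    ∑' i : {j // p j}, ‖⟪x, f i⟫‖ ^ 2 ≤ B * ‖x‖ ^ 2 :=
  (Summable.tsum_subtype_le (fun i => ‖⟪x, f i⟫‖ ^ 2) {j | p j} (fun _ => sq_nonneg _)
    (hsum x)).trans (hub x)

lemma tsum_subtype_le_perturb_of_bessel (p : ι → Prop) (u v : H) {t : ℝ} (ht : 0 < t) :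
    ∑' i : {j // p j}, ‖⟪v, f i⟫‖ ^ 2 ≤
      (1 + t) * ∑' i : {j // p j}, ‖⟪u, f i⟫‖ ^ 2 + (1 + t⁻¹) * (B * ‖v - u‖ ^ 2) := by
  have hsub : ∀ y : H, Summable fun i : {j // p j} => ‖⟪y, f i⟫‖ ^ 2 :=
    fun y => (hsum y).subtype {j | p j}
  have hpt : ∀ i : {j // p j},
      ‖⟪v, f i⟫‖ ^ 2 ≤ (1 + t) * ‖⟪u, f i⟫‖ ^ 2 + (1 + t⁻¹) * ‖⟪v - u, f i⟫‖ ^ 2 := by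
    intro i
    calc ‖⟪v, f i⟫‖ ^ 2 ≤ (‖⟪u, f i⟫‖ + ‖⟪v - u, f i⟫‖) ^ 2 := by
          gcongr
          simpa [inner_sub_left] using norm_add_le ⟪u, f i⟫ ⟪v - u, f i⟫
      _ ≤ _ := add_sq_le_one_add_mul_sq_add ht
  calc ∑' i : {j // p j}, ‖⟪v, f i⟫‖ ^ 2
      ≤ ∑' i : {j // p j}, ((1 + t) * ‖⟪u, f i⟫‖ ^ 2 + (1 + t⁻¹) * ‖⟪v - u, f i⟫‖ ^ 2) :=
        (hsub v).tsum_le_tsum hpt (((hsub u).mul_left _).add ((hsub _).mul_left _))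
    _ = (1 + t) * ∑' i : {j // p j}, ‖⟪u, f i⟫‖ ^ 2
          + (1 + t⁻¹) * ∑' i : {j // p j}, ‖⟪v - u, f i⟫‖ ^ 2 := by
        rw [((hsub u).mul_left _).tsum_add ((hsub _).mul_left _), tsum_mul_left, tsum_mul_left]
    _ ≤ _ := by
        gcongr
        exact tsum_subtype_le_of_bessel hsum hub p _

end Bessel

lemma ContinuousLinearMap.isPositive_of_inner_apply_self_eq_ofReal {H : Type*}
    [NormedAddCommGroup H] [InnerProductSpace ℂ H] {T : H →L[ℂ] H} {r : H → ℝ}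
    (hT : ∀ x, ⟪T x, x⟫ = r x) (hr : ∀ x, 0 ≤ r x) : T.IsPositive := by
  rw [ContinuousLinearMap.isPositive_iff_complex]
  intro x
  simpa only [hT, RCLike.re_to_complex, Complex.ofReal_re, true_and] using hr x

lemma ContinuousLinearMap.injective_of_comp_eq_one {R M N : Type*} [Semiring R]
    [TopologicalSpace M] [AddCommMonoid M] [Module R M]
    [TopologicalSpace N] [AddCommMonoid N] [Module R N]
    {f : M →L[R] N} {g : N →L[R] M} (h : g.comp f = 1) : Function.Injective f :=
  .of_comp (f := g) <| by
    rw [← ContinuousLinearMap.coe_comp, h]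
    exact fun _ _ => id

section FrameOperator

variable {H : Type*} [NormedAddCommGroup H] [InnerProductSpace ℂ H] {ι : Type*} {f : ι → H}
  {S : H →L[ℂ] H}

lemma hasSum_frameOp_of_injective (hS : ∀ x, S x = ∑' i, ⟪f i, x⟫ • f i)
    (hinj : Function.Injective S) (x : H) : HasSum (fun i => ⟪f i, x⟫ • f i) (S x) := by
  by_cases hx : Summable fun i => ⟪f i, x⟫ • f i
  · exact hS x ▸ hx.hasSum
  · have hx0 : x = 0 := hinj (by rw [hS, tsum_eq_zero_of_not_summable hx, map_zero])
    exact absurd (by simp [hx0]) hx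

variable (hS : ∀ x, HasSum (fun i => ⟪f i, x⟫ • f i) (S x))
include hS

lemma inner_frameOp_apply_self (x : H) : ⟪S x, x⟫ = ((∑' i, ‖⟪x, f i⟫‖ ^ 2 : ℝ) : ℂ) := by
  have hterm (i : ι) : innerSL ℂ x (⟪f i, x⟫ • f i) = ((‖⟪x, f i⟫‖ ^ 2 : ℝ) : ℂ) := by
    rw [innerSL_apply_apply, inner_smul_right, ← inner_conj_symm x (f i), RCLike.mul_conj,
      RCLike.norm_conj]
    push_cast
    rfl
  have h := (hS x).mapL (innerSL ℂ x)
  simp only [hterm, innerSL_apply_apply] at h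
  rw [← inner_conj_symm, ← h.tsum_eq, ← Complex.ofReal_tsum, Complex.conj_ofReal]

lemma frameOp_isPositive : S.IsPositive :=
  ContinuousLinearMap.isPositive_of_inner_apply_self_eq_ofReal (inner_frameOp_apply_self hS)
    fun _ => tsum_nonneg fun _ => sq_nonneg _

lemma norm_frameOp_le [CompleteSpace H] {B : ℝ} (hB : 0 ≤ B)
    (hub : ∀ x : H, ∑' i, ‖⟪x, f i⟫‖ ^ 2 ≤ B * ‖x‖ ^ 2) : ‖S‖ ≤ B := by
  have hle : S ≤ algebraMap ℝ (H →L[ℂ] H) B := by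
    refine ContinuousLinearMap.isPositive_of_inner_apply_self_eq_ofReal (fun x => ?_)
      (fun x => sub_nonneg.2 (hub x))
    simp [inner_frameOp_apply_self hS, Algebra.algebraMap_eq_smul_one]
  exact (CStarAlgebra.norm_le_iff_le_algebraMap S hB
    ((ContinuousLinearMap.nonneg_iff_isPositive S).2 (frameOp_isPositive hS))).2 hle

end FrameOperator

lemma ContinuousLinearMap.norm_le_opNorm_mul_norm_adjoint_apply {E F : Type*}
    [NormedAddCommGroup E] [InnerProductSpace ℂ E] [CompleteSpace E]
    [NormedAddCommGroup F] [InnerProductSpace ℂ F] [CompleteSpace F]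
    {T : E →L[ℂ] F} {R : F →L[ℂ] E} (h : R.comp T = 1) (x : E) :
    ‖x‖ ≤ ‖T‖ * ‖R.adjoint x‖ := by
  have hx : T.adjoint (R.adjoint x) = x := by
    rw [← ContinuousLinearMap.comp_apply, ← ContinuousLinearMap.adjoint_comp, h,
      ContinuousLinearMap.one_def, ContinuousLinearMap.adjoint_id, ContinuousLinearMap.id_apply]
  calc ‖x‖ = ‖T.adjoint (R.adjoint x)‖ := by rw [hx]
    _ ≤ ‖T‖ * ‖R.adjoint x‖ := by
      simpa only [ContinuousLinearMap.adjoint.norm_map] using T.adjoint.le_opNorm _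

section Weaving

variable {H : Type*} [NormedAddCommGroup H] [InnerProductSpace ℂ H] {ι : Type*}

noncomputable def wovenSum (f g : ι → H) (σ : Set ι) (x : H) : ℝ :=
  ∑' i : {j // j ∉ σ}, ‖⟪x, f i⟫‖ ^ 2 + ∑' i : {j // j ∈ σ}, ‖⟪x, g i⟫‖ ^ 2

lemma wovenSum_compl (f g : ι → H) (σ : Set ι) (x : H) :
    wovenSum g f σᶜ x = wovenSum f g σ x := by
  unfold wovenSum
  rw [add_comm]
  congr 1
  exact (Equiv.subtypeEquivRight fun j => not_not (a := j ∈ σ)).tsum_eq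
    fun i : {j // j ∈ σ} => ‖⟪x, g i⟫‖ ^ 2

variable [CompleteSpace H]

lemma wovenSum_comp (f g : ι → H) (T R : H →L[ℂ] H) (σ : Set ι) (x : H) :
    wovenSum (fun i => T (f i)) (fun i => R (g i)) σ x =
      ∑' i : {j // j ∉ σ}, ‖⟪T.adjoint x, f i⟫‖ ^ 2 +
        ∑' i : {j // j ∈ σ}, ‖⟪R.adjoint x, g i⟫‖ ^ 2 := by
  simp only [wovenSum, ContinuousLinearMap.adjoint_inner_left]

variable {f g : ι → H} {BF BG C : ℝ}
  (hsumF : ∀ x : H, Summable fun i => ‖⟪x, f i⟫‖ ^ 2)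
  (hubF : ∀ x : H, ∑' i, ‖⟪x, f i⟫‖ ^ 2 ≤ BF * ‖x‖ ^ 2)
include hsumF hubF

lemma exists_pos_le_wovenSum_comp (hBF : 0 ≤ BF) (hBG : 0 < BG)
    (hwoven : ∀ σ x, C * ‖x‖ ^ 2 ≤ wovenSum f g σ x) {T R : H →L[ℂ] H}
    (hR : ∀ x, ‖x‖ ≤ BG * ‖R.adjoint x‖) (hTR : BF * ‖T - R‖ ^ 2 < C / BG ^ 2) :
    ∃ A > 0, ∀ σ x, A * ‖x‖ ^ 2 ≤ wovenSum (fun i => T (f i)) (fun i => R (g i)) σ x := by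
  obtain ⟨t, ht, hlt⟩ := exists_pos_one_add_inv_mul_lt hTR
  have hC : 0 ≤ C / BG ^ 2 := (mul_nonneg hBF (sq_nonneg _)).trans hTR.le
  refine ⟨(C / BG ^ 2 - (1 + t⁻¹) * (BF * ‖T - R‖ ^ 2)) / (1 + t),
    div_pos (sub_pos.2 hlt) (by positivity), fun σ x => ?_⟩
  have hW := wovenSum_comp f g T R σ x
  set u := T.adjoint x
  set v := R.adjoint x
  have hvu : ‖v - u‖ ≤ ‖T - R‖ * ‖x‖ :=
    calc ‖v - u‖ = ‖(R - T).adjoint x‖ := by simp only [map_sub, sub_apply, u, v]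
      _ ≤ ‖(R - T).adjoint‖ * ‖x‖ := (R - T).adjoint.le_opNorm x
      _ = ‖T - R‖ * ‖x‖ := by rw [ContinuousLinearMap.adjoint.norm_map, norm_sub_rev]
  have hv : C / BG ^ 2 * ‖x‖ ^ 2 ≤ C * ‖v‖ ^ 2 :=
    calc C / BG ^ 2 * ‖x‖ ^ 2 ≤ C / BG ^ 2 * (BG * ‖v‖) ^ 2 := by gcongr; exact hR x
      _ = C * ‖v‖ ^ 2 := by field_simp
  have hw : C * ‖v‖ ^ 2 ≤ ∑' i : {j // j ∉ σ}, ‖⟪v, f i⟫‖ ^ 2 +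
      ∑' i : {j // j ∈ σ}, ‖⟪v, g i⟫‖ ^ 2 := hwoven σ v
  have hf := tsum_subtype_le_perturb_of_bessel hsumF hubF (fun j => j ∉ σ) u v ht
  have hg : ∑' i : {j // j ∈ σ}, ‖⟪v, g i⟫‖ ^ 2 ≤ (1 + t) * ∑' i : {j // j ∈ σ}, ‖⟪v, g i⟫‖ ^ 2 :=
    le_mul_of_one_le_left (tsum_nonneg fun _ => sq_nonneg _) (by linarith)
  have hvu2 : (1 + t⁻¹) * (BF * ‖v - u‖ ^ 2) ≤ (1 + t⁻¹) * (BF * ‖T - R‖ ^ 2) * ‖x‖ ^ 2 := by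
    rw [mul_assoc, mul_assoc, ← mul_pow]
    gcongr
  rw [hW, div_mul_eq_mul_div, div_le_iff₀ (by positivity)]
  linarith

variable (hsumG : ∀ x : H, Summable fun i => ‖⟪x, g i⟫‖ ^ 2)
  (hubG : ∀ x : H, ∑' i, ‖⟪x, g i⟫‖ ^ 2 ≤ BG * ‖x‖ ^ 2)
include hsumG hubG

lemma exists_pos_le_wovenSum_comp_of_norm_sub_sq_lt (hBF : 0 < BF) (hBG : 0 < BG)
    (hwoven : ∀ σ x, C * ‖x‖ ^ 2 ≤ wovenSum f g σ x) {T R : H →L[ℂ] H}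
    (hT : ∀ x, ‖x‖ ≤ BF * ‖T.adjoint x‖) (hR : ∀ x, ‖x‖ ≤ BG * ‖R.adjoint x‖)
    (hTR : ‖T - R‖ ^ 2 < C * max (1 / (BG * BF ^ 2)) (1 / (BF * BG ^ 2))) :
    ∃ A > 0, ∀ σ x, A * ‖x‖ ^ 2 ≤ wovenSum (fun i => T (f i)) (fun i => R (g i)) σ x := by
  rcases max_choice (1 / (BG * BF ^ 2)) (1 / (BF * BG ^ 2)) with hmax | hmax <;>
    rw [hmax, mul_one_div, lt_div_iff₀ (by positivity)] at hTR
  · have hRT : BG * ‖R - T‖ ^ 2 < C / BF ^ 2 := by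
      rw [norm_sub_rev, lt_div_iff₀ (by positivity)]
      linarith
    obtain ⟨A, hA, hle⟩ := exists_pos_le_wovenSum_comp hsumG hubG hBG.le hBF
      (fun σ x => wovenSum_compl g f σ x ▸ hwoven σᶜ x) hT hRT
    exact ⟨A, hA, fun σ x => wovenSum_compl _ _ σ x ▸ hle σᶜ x⟩
  · refine exists_pos_le_wovenSum_comp hsumF hubF hBF.le hBG hwoven hR ?_
    rw [lt_div_iff₀ (by positivity)]
    linarith

lemma exists_wovenSum_comp_le (hBF : 0 ≤ BF) (hBG : 0 ≤ BG) (T R : H →L[ℂ] H) :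
    ∃ B > 0, ∀ σ x, wovenSum (fun i => T (f i)) (fun i => R (g i)) σ x ≤ B * ‖x‖ ^ 2 := by
  refine ⟨BF * ‖T‖ ^ 2 + BG * ‖R‖ ^ 2 + 1, by positivity, fun σ x => ?_⟩
  have hTx : BF * ‖T.adjoint x‖ ^ 2 ≤ BF * ‖T‖ ^ 2 * ‖x‖ ^ 2 := by
    rw [mul_assoc, ← mul_pow, ← ContinuousLinearMap.adjoint.norm_map T]
    gcongr
    exact T.adjoint.le_opNorm x
  have hRx : BG * ‖R.adjoint x‖ ^ 2 ≤ BG * ‖R‖ ^ 2 * ‖x‖ ^ 2 := by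
    rw [mul_assoc, ← mul_pow, ← ContinuousLinearMap.adjoint.norm_map R]
    gcongr
    exact R.adjoint.le_opNorm x
  rw [wovenSum_comp]
  linarith [tsum_subtype_le_of_bessel hsumF hubF (fun j => j ∉ σ) (T.adjoint x),
    tsum_subtype_le_of_bessel hsumG hubG (fun j => j ∈ σ) (R.adjoint x), sq_nonneg ‖x‖]

end Weaving

theorem woven_of_canonical_duals_general
    {H : Type*} [NormedAddCommGroup H] [InnerProductSpace ℂ H] [CompleteSpace H]
    {ι : Type*}
    (f g : ι → H) (AF BF AG BG C : ℝ)
    (hAF : 0 < AF) (hBF : 0 < BF) (hAG : 0 < AG) (hBG : 0 < BG)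
    (hframeF : ∀ x : H, AF * ‖x‖ ^ 2 ≤ (∑' i : ι, ‖⟪x, f i⟫‖ ^ 2) ∧
      (∑' i : ι, ‖⟪x, f i⟫‖ ^ 2) ≤ BF * ‖x‖ ^ 2)
    (hframeG : ∀ x : H, AG * ‖x‖ ^ 2 ≤ (∑' i : ι, ‖⟪x, g i⟫‖ ^ 2) ∧
      (∑' i : ι, ‖⟪x, g i⟫‖ ^ 2) ≤ BG * ‖x‖ ^ 2)
    (hwoven : ∀ (σ : Set ι) (x : H),
      C * ‖x‖ ^ 2 ≤
        (∑' i : {j : ι // j ∉ σ}, ‖⟪x, f (i : ι)⟫‖ ^ 2) +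
          ∑' i : {j : ι // j ∈ σ}, ‖⟪x, g (i : ι)⟫‖ ^ 2)
    (SF SG SFinv SGinv : H →L[ℂ] H)
    (hSF : ∀ x : H, SF x = ∑' i : ι, ⟪f i, x⟫ • f i)
    (hSG : ∀ x : H, SG x = ∑' i : ι, ⟪g i, x⟫ • g i)
    (hSFinv : SF.comp SFinv = 1 ∧ SFinv.comp SF = 1)
    (hSGinv : SG.comp SGinv = 1 ∧ SGinv.comp SG = 1)
    (hpert : ‖SFinv - SGinv‖ ^ 2 < C * max (1 / (BG * BF ^ 2)) (1 / (BF * BG ^ 2))) :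
    ∃ A' B' : ℝ, 0 < A' ∧ 0 < B' ∧
      ∀ (σ : Set ι) (x : H),
        A' * ‖x‖ ^ 2 ≤
            (∑' i : {j : ι // j ∉ σ}, ‖⟪x, SFinv (f (i : ι))⟫‖ ^ 2) +
              ∑' i : {j : ι // j ∈ σ}, ‖⟪x, SGinv (g (i : ι))⟫‖ ^ 2 ∧
          (∑' i : {j : ι // j ∉ σ}, ‖⟪x, SFinv (f (i : ι))⟫‖ ^ 2) +
              (∑' i : {j : ι // j ∈ σ}, ‖⟪x, SGinv (g (i : ι))⟫‖ ^ 2) ≤ B' * ‖x‖ ^ 2 := by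
  have hsumF := summable_of_frame_lower_bound hAF fun x => (hframeF x).1
  have hsumG := summable_of_frame_lower_bound hAG fun x => (hframeG x).1
  have hubF := fun x => (hframeF x).2
  have hubG := fun x => (hframeG x).2
  have hnormSF := norm_frameOp_le (hasSum_frameOp_of_injective hSF
    (ContinuousLinearMap.injective_of_comp_eq_one hSFinv.2)) hBF.le hubF
  have hnormSG := norm_frameOp_le (hasSum_frameOp_of_injective hSG
    (ContinuousLinearMap.injective_of_comp_eq_one hSGinv.2)) hBG.le hubG
  obtain ⟨A, hA, hlow⟩ := exists_pos_le_wovenSum_comp_of_norm_sub_sq_lt hsumF hubF hsumG hubG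
    hBF hBG hwoven
    (fun x => (ContinuousLinearMap.norm_le_opNorm_mul_norm_adjoint_apply hSFinv.2 x).trans
      (by gcongr))
    (fun x => (ContinuousLinearMap.norm_le_opNorm_mul_norm_adjoint_apply hSGinv.2 x).trans
      (by gcongr)) hpert
  obtain ⟨B, hB, hup⟩ := exists_wovenSum_comp_le hsumF hubF hsumG hubG hBF.le hBG.le SFinv SGinv
  exact ⟨A, B, hA, hB, fun σ x => ⟨hlow σ x, hup σ x⟩⟩

/-- **Woven pairs of canonical duals.**
Let `(f, g)` be a woven pair of frames for `H` with uniform lower frame constant `C > 0` and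
Bessel bounds `BF`, `BG`, with invertible frame operators `SF`, `SG`.  If
`‖SF⁻¹ − SG⁻¹‖² < C · max{1/(BG·BF²), 1/(BF·BG²)}`, then the canonical dual frames
`(SF⁻¹ f, SG⁻¹ g)` form a woven pair. -/
theorem woven_of_canonical_duals
    {H : Type*} [NormedAddCommGroup H] [InnerProductSpace ℂ H] [CompleteSpace H]
    {ι : Type*} [Countable ι]
    (f g : ι → H) (AF BF AG BG C : ℝ)
    (hAF : 0 < AF) (hBF : 0 < BF) (hAG : 0 < AG) (hBG : 0 < BG) (hC : 0 < C)
    (hframeF : ∀ x : H, AF * ‖x‖ ^ 2 ≤ (∑' i : ι, ‖⟪x, f i⟫‖ ^ 2) ∧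
      (∑' i : ι, ‖⟪x, f i⟫‖ ^ 2) ≤ BF * ‖x‖ ^ 2)
    (hframeG : ∀ x : H, AG * ‖x‖ ^ 2 ≤ (∑' i : ι, ‖⟪x, g i⟫‖ ^ 2) ∧
      (∑' i : ι, ‖⟪x, g i⟫‖ ^ 2) ≤ BG * ‖x‖ ^ 2)
    (hwoven : ∀ (σ : Set ι) (x : H),
      C * ‖x‖ ^ 2 ≤
        (∑' i : {j : ι // j ∉ σ}, ‖⟪x, f (i : ι)⟫‖ ^ 2) +
          ∑' i : {j : ι // j ∈ σ}, ‖⟪x, g (i : ι)⟫‖ ^ 2)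
    (SF SG SFinv SGinv : H →L[ℂ] H)
    (hSF : ∀ x : H, SF x = ∑' i : ι, ⟪f i, x⟫ • f i)
    (hSG : ∀ x : H, SG x = ∑' i : ι, ⟪g i, x⟫ • g i)
    (hSFinv : SF.comp SFinv = 1 ∧ SFinv.comp SF = 1)
    (hSGinv : SG.comp SGinv = 1 ∧ SGinv.comp SG = 1)
    (hpert : ‖SFinv - SGinv‖ ^ 2 < C * max (1 / (BG * BF ^ 2)) (1 / (BF * BG ^ 2))) :
    ∃ A' B' : ℝ, 0 < A' ∧ 0 < B' ∧
      ∀ (σ : Set ι) (x : H),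
        A' * ‖x‖ ^ 2 ≤
            (∑' i : {j : ι // j ∉ σ}, ‖⟪x, SFinv (f (i : ι))⟫‖ ^ 2) +
              ∑' i : {j : ι // j ∈ σ}, ‖⟪x, SGinv (g (i : ι))⟫‖ ^ 2 ∧
          (∑' i : {j : ι // j ∉ σ}, ‖⟪x, SFinv (f (i : ι))⟫‖ ^ 2) +
              (∑' i : {j : ι // j ∈ σ}, ‖⟪x, SGinv (g (i : ι))⟫‖ ^ 2) ≤ B' * ‖x‖ ^ 2 :=
  woven_of_canonical_duals_general f g AF BF AG BG C hAF hBF hAG hBG hframeF hframeG hwoven SF SG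
    SFinv SGinv hSF hSG hSFinv hSGinv hpert
end

section
/- Let H be a complex Hilbert space and let A, B : H → H be bounded linear operators with closed ranges. Then the composition AB has closed range if and only if c[ R(B), N(A) ] < 1, where c[·,·] denotes the cosine of the angle between the (closed) range of B and the kernel of A. -/
open ContinuousLinearMap

variable {H : Type*} [NormedAddCommGroup H] [InnerProductSpace ℂ H] [CompleteSpace H]

/-- The orthogonal projection of `H` onto a closed subspace `K`, as an operator `H →L[ℂ] H`. -/
noncomputable def projCLM (K : Submodule ℂ H) (hK : IsClosed (K : Set H)) : H →L[ℂ] H :=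
  haveI : CompleteSpace K := hK.completeSpace_coe
  K.subtypeL.comp K.orthogonalProjectionOnto

/-- The cosine of the angle between two closed subspaces `M`, `N` of a Hilbert space:
`c[M, N] = ‖P_M ∘ P_N ∘ P_{(M ⊓ N)ᗮ}‖`. -/
noncomputable def cosAngle (M N : Submodule ℂ H) (hM : IsClosed (M : Set H))
    (hN : IsClosed (N : Set H)) : ℝ :=
  ‖(projCLM M hM).comp ((projCLM N hN).comp
      (projCLM (M ⊓ N)ᗮ (M ⊓ N).isClosed_orthogonal))‖

/-!
Write `M = R(B)` and `N = N(A)`. Since `A` has closed range it is an open quotient map onto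
`R(A)`, so `R(AB) = A(M)` is closed iff its saturation `M + N` is closed. By the open mapping
theorem, for closed `M` and `N'` with `M ∩ N' = 0` the sum `M + N'` is closed iff
`c ‖n‖ ≤ ‖m + n‖` for some `c > 0`, i.e. iff the distance of unit vectors of `N'` to `M` is
bounded below, i.e. (Pythagoras) iff `‖P_M n‖ ≤ ρ ‖n‖` on `N'` for some `ρ < 1`. Applied to
`N' = N ⊖ (M ∩ N)`, which has `M + N' = M + N`, this last norm is exactly `c[M, N]`.
-/

namespace ContinuousLinearMap

variable {𝕜 E F : Type*} [NontriviallyNormedField 𝕜] [NormedAddCommGroup E] [NormedSpace 𝕜 E]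
  [NormedAddCommGroup F] [NormedSpace 𝕜 F] [CompleteSpace E] [CompleteSpace F]

/- `K ⊔ ker T` is saturated for the open quotient map `T : E → range T`, and has the same image
as `K`. -/
theorem isClosed_map_iff_isClosed_sup_ker (T : E →L[𝕜] F)
    (hT : IsClosed (LinearMap.range (T : E →ₗ[𝕜] F) : Set F)) (K : Submodule 𝕜 E) :
    IsClosed (K.map (T : E →ₗ[𝕜] F) : Set F) ↔
      IsClosed ((K ⊔ LinearMap.ker (T : E →ₗ[𝕜] F) : Submodule 𝕜 E) : Set E) := by
  constructor
  · intro h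
    rw [← Submodule.comap_map_eq]
    exact h.preimage T.continuous
  · intro h
    have : CompleteSpace (LinearMap.range (T : E →ₗ[𝕜] F)) := hT.completeSpace_coe
    set L := K ⊔ LinearMap.ker (T : E →ₗ[𝕜] F)
    have hmap : L.map (T : E →ₗ[𝕜] F) = K.map (T : E →ₗ[𝕜] F) := by
      rw [Submodule.map_sup, LinearMap.le_ker_iff_map.1 le_rfl, sup_bot_eq]
    have hquot : Topology.IsQuotientMap T.rangeRestrict :=
      T.rangeRestrict.isQuotientMap (LinearMap.surjective_rangeRestrict _)
    have hS : IsClosed (Subtype.val ⁻¹' (L.map (T : E →ₗ[𝕜] F) : Set F) :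
        Set (LinearMap.range (T : E →ₗ[𝕜] F))) := by
      rw [← hquot.isClosed_preimage]
      convert h using 1
      exact congrArg SetLike.coe (Submodule.comap_map_eq_self le_sup_right)
    rw [← hmap]
    convert hT.isClosedMap_subtype_val _ hS
    exact (Set.image_preimage_eq_of_subset (by simp)).symm

end ContinuousLinearMap

namespace Submodule

section Normed

variable {𝕜 E : Type*} [NontriviallyNormedField 𝕜] [NormedAddCommGroup E] [NormedSpace 𝕜 E]

theorem range_subtypeL_coprod (M N : Submodule 𝕜 E) :
    Set.range (M.subtypeL.coprod N.subtypeL) = (M ⊔ N : Submodule 𝕜 E) := by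
  ext x
  simp [mem_sup, eq_comm]

theorem injective_subtypeL_coprod {M N : Submodule 𝕜 E} (h : Disjoint M N) :
    Function.Injective (M.subtypeL.coprod N.subtypeL) := by
  rw [injective_iff_map_eq_zero]
  rintro ⟨⟨m, hm⟩, ⟨n, hn⟩⟩ hmn
  have hm_eq : m = -n := eq_neg_of_add_eq_zero_left (by simpa using hmn)
  have hm0 : m = 0 := disjoint_def.1 h m hm (hm_eq ▸ N.neg_mem hn)
  simp_all

theorem isClosed_sup_iff_exists_mul_norm_le [CompleteSpace E] {M N : Submodule 𝕜 E}
    (hM : IsClosed (M : Set E)) (hN : IsClosed (N : Set E)) (hMN : Disjoint M N) :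
    IsClosed ((M ⊔ N : Submodule 𝕜 E) : Set E) ↔
      ∃ c > 0, ∀ m ∈ M, ∀ n ∈ N, c * ‖n‖ ≤ ‖m + n‖ := by
  have := hM.completeSpace_coe
  have := hN.completeSpace_coe
  rw [← range_subtypeL_coprod, isClosed_range_iff_antilipschitz_of_injective _
    (injective_subtypeL_coprod hMN), antilipschitzWith_iff_exists_mul_le_norm]
  constructor
  · rintro ⟨c, hc, hbound⟩
    refine ⟨c, hc, fun m hm n hn => ?_⟩
    calc c * ‖n‖ ≤ c * ‖((⟨m, hm⟩, ⟨n, hn⟩) : M × N)‖ := by gcongr; exact le_max_right _ _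
      _ ≤ ‖m + n‖ := by simpa using hbound ((⟨m, hm⟩, ⟨n, hn⟩) : M × N)
  · rintro ⟨c, hc, hbound⟩
    refine ⟨c / (c + 1), by positivity, fun ⟨⟨m, hm⟩, ⟨n, hn⟩⟩ => ?_⟩
    have hn' := hbound m hm n hn
    have hm' : ‖m‖ ≤ ‖m + n‖ + ‖n‖ := norm_le_add_norm_add m n
    simp only [Prod.norm_def, coprod_apply, coe_subtypeL, coe_subtype, coe_norm,
      mul_max_of_nonneg _ _ (by positivity : 0 ≤ c / (c + 1)), div_mul_eq_mul_div]
    refine max_le ?_ ?_ <;> rw [div_le_iff₀ (by positivity)] <;> nlinarith [norm_nonneg (m + n)]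

end Normed

section InnerProduct

variable {𝕜 E : Type*} [RCLike 𝕜] [NormedAddCommGroup E] [InnerProductSpace 𝕜 E]
  (K : Submodule 𝕜 E) [K.HasOrthogonalProjection]

theorem norm_sub_starProjection_le {m : E} (hm : m ∈ K) (x : E) :
    ‖x - K.starProjection x‖ ≤ ‖x - m‖ := by
  rw [starProjection_minimal]
  exact ciInf_le ⟨0, Set.forall_mem_range.mpr fun _ => norm_nonneg _⟩ (⟨m, hm⟩ : K)

theorem norm_sq_eq_norm_starProjection_sq_add (x : E) :
    ‖x‖ ^ 2 = ‖K.starProjection x‖ ^ 2 + ‖x - K.starProjection x‖ ^ 2 := by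
  simpa [starProjection_orthogonal'] using norm_sq_eq_add_norm_sq_starProjection x K

/- Taking `m = -P_K n`, the bound says `c ‖n‖ ≤ ‖n - P_K n‖`; by Pythagoras this is
`‖P_K n‖ ≤ √(1 - c²) ‖n‖`. -/
theorem exists_mul_norm_le_add_iff_norm_starProjection_comp_subtypeL_lt_one (N : Submodule 𝕜 E) :
    (∃ c > 0, ∀ m ∈ K, ∀ n ∈ N, c * ‖n‖ ≤ ‖m + n‖) ↔ ‖K.starProjection ∘L N.subtypeL‖ < 1 := by
  constructor
  · rintro ⟨c, hc, hbound⟩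
    have hdist : ∀ n ∈ N, c * ‖n‖ ≤ ‖n - K.starProjection n‖ := fun n hn => by
      simpa [sub_eq_neg_add] using hbound _ (K.neg_mem (K.starProjection_apply_mem n)) n hn
    refine lt_of_le_of_lt (opNorm_le_bound _ (Real.sqrt_nonneg (1 - c ^ 2)) fun n => ?_)
      ((Real.sqrt_lt' one_pos).2 (by nlinarith))
    have hsq : ‖K.starProjection n‖ ^ 2 ≤ (1 - c ^ 2) * ‖(n : E)‖ ^ 2 := by
      have := hdist n n.2
      nlinarith [K.norm_sq_eq_norm_starProjection_sq_add n, mul_nonneg hc.le (norm_nonneg (n : E))]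
    calc ‖K.starProjection n‖ = √(‖K.starProjection n‖ ^ 2) := (Real.sqrt_sq (norm_nonneg _)).symm
      _ ≤ √((1 - c ^ 2) * ‖(n : E)‖ ^ 2) := Real.sqrt_le_sqrt hsq
      _ = √(1 - c ^ 2) * ‖n‖ := by
        rw [Real.sqrt_mul' _ (sq_nonneg _), Real.sqrt_sq (norm_nonneg _)]; rfl
  · intro hlt
    refine ⟨1 - ‖K.starProjection ∘L N.subtypeL‖, by linarith, fun m hm n hn => ?_⟩
    have hP : ‖K.starProjection n‖ ≤ ‖K.starProjection ∘L N.subtypeL‖ * ‖n‖ :=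
      (K.starProjection ∘L N.subtypeL).le_opNorm ⟨n, hn⟩
    calc (1 - ‖K.starProjection ∘L N.subtypeL‖) * ‖n‖ ≤ ‖n‖ - ‖K.starProjection n‖ := by linarith
      _ ≤ ‖n - K.starProjection n‖ := norm_sub_norm_le _ _
      _ ≤ ‖n - -m‖ := K.norm_sub_starProjection_le (K.neg_mem hm) n
      _ = ‖m + n‖ := by rw [sub_neg_eq_add, add_comm]

end InnerProduct

end Submodule

theorem projCLM_eq_starProjection (K : Submodule ℂ H) (hK : IsClosed (K : Set H))
    [K.HasOrthogonalProjection] : projCLM K hK = K.starProjection := rfl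

open Submodule in
/- Since `M ⊓ N ≤ N`, the projection onto `N` preserves `(M ⊓ N)ᗮ`, so `P_N ∘ P_{(M ⊓ N)ᗮ}` is
the projection onto `N ⊓ (M ⊓ N)ᗮ`. -/
theorem cosAngle_eq_norm_starProjection_comp_subtypeL (M N : Submodule ℂ H)
    (hM : IsClosed (M : Set H)) (hN : IsClosed (N : Set H)) [M.HasOrthogonalProjection] :
    cosAngle M N hM hN = ‖M.starProjection ∘L (N ⊓ (M ⊓ N)ᗮ).subtypeL‖ := by
  have := hN.completeSpace_coe
  have : CompleteSpace (M ⊓ N : Submodule ℂ H) := (hM.inter hN).completeSpace_coe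
  set L := M ⊓ N
  have hmem : ∀ x, N.starProjection (Lᗮ.starProjection x) ∈ N ⊓ Lᗮ := fun x => by
    refine ⟨N.starProjection_apply_mem _, (starProjection_apply_eq_zero_iff L).1 ?_⟩
    rw [← comp_apply, starProjection_comp_starProjection_of_le inf_le_right,
      starProjection_apply_eq_zero_iff]
    exact Lᗮ.starProjection_apply_mem x
  rw [cosAngle, projCLM_eq_starProjection M hM, projCLM_eq_starProjection N hN,
    projCLM_eq_starProjection Lᗮ]
  apply le_antisymm
  · refine opNorm_le_bound _ (opNorm_nonneg _) fun x => ?_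
    calc ‖M.starProjection (N.starProjection (Lᗮ.starProjection x))‖
        = ‖(M.starProjection ∘L (N ⊓ Lᗮ).subtypeL) ⟨_, hmem x⟩‖ := rfl
      _ ≤ ‖M.starProjection ∘L (N ⊓ Lᗮ).subtypeL‖ * ‖N.starProjection (Lᗮ.starProjection x)‖ :=
        le_opNorm _ _
      _ ≤ ‖M.starProjection ∘L (N ⊓ Lᗮ).subtypeL‖ * ‖x‖ := by
        gcongr
        exact (N.norm_starProjection_apply_le _).trans (Lᗮ.norm_starProjection_apply_le x)
  · refine opNorm_le_bound _ (opNorm_nonneg _) fun ⟨n, hnN, hnL⟩ => ?_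
    calc ‖M.starProjection n‖
        = ‖(M.starProjection ∘L N.starProjection ∘L Lᗮ.starProjection) n‖ := by
          simp [starProjection_eq_self_iff.2 hnN, starProjection_eq_self_iff.2 hnL]
      _ ≤ _ := le_opNorm _ _

open Submodule in
theorem isClosed_sup_iff_cosAngle_lt_one (M N : Submodule ℂ H) (hM : IsClosed (M : Set H))
    (hN : IsClosed (N : Set H)) :
    IsClosed ((M ⊔ N : Submodule ℂ H) : Set H) ↔ cosAngle M N hM hN < 1 := by
  have := hM.completeSpace_coe
  have : CompleteSpace (M ⊓ N : Submodule ℂ H) := (hM.inter hN).completeSpace_coe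
  set L := M ⊓ N
  have hN' : IsClosed ((N ⊓ Lᗮ : Submodule ℂ H) : Set H) := hN.inter L.isClosed_orthogonal
  have hsup : M ⊔ N ⊓ Lᗮ = M ⊔ N := by
    conv_rhs => rw [← sup_orthogonal_inf_of_hasOrthogonalProjection (inf_le_right : L ≤ N),
      ← sup_assoc, sup_eq_left.2 (inf_le_left : L ≤ M), inf_comm]
  have hdisj : Disjoint M (N ⊓ Lᗮ) :=
    disjoint_iff.2 (by rw [← inf_assoc]; exact L.inf_orthogonal_eq_bot)
  rw [cosAngle_eq_norm_starProjection_comp_subtypeL,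
    ← exists_mul_norm_le_add_iff_norm_starProjection_comp_subtypeL_lt_one,
    ← isClosed_sup_iff_exists_mul_norm_le hM hN' hdisj, hsup]

/-- **Closed range of a product and angles.**
If `A, B` are bounded operators on a complex Hilbert space with closed ranges, then `A ∘ B`
has closed range if and only if the cosine of the angle between `R(B)` and `N(A)` is `< 1`. -/
theorem closedRange_comp_iff_cosAngle_lt_one
    (A B : H →L[ℂ] H)
    (hA : IsClosed ((LinearMap.range (A : H →ₗ[ℂ] H) : Submodule ℂ H) : Set H))
    (hB : IsClosed ((LinearMap.range (B : H →ₗ[ℂ] H) : Submodule ℂ H) : Set H)) :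
    IsClosed ((LinearMap.range ((A.comp B : H →L[ℂ] H) : H →ₗ[ℂ] H) : Submodule ℂ H) : Set H) ↔
      cosAngle (LinearMap.range (B : H →ₗ[ℂ] H)) (LinearMap.ker (A : H →ₗ[ℂ] H)) hB (isClosed_ker A) < 1 := by
  have hrange : LinearMap.range ((A.comp B : H →L[ℂ] H) : H →ₗ[ℂ] H) =
      (LinearMap.range (B : H →ₗ[ℂ] H)).map (A : H →ₗ[ℂ] H) :=
    LinearMap.range_comp _ _
  rw [hrange, A.isClosed_map_iff_isClosed_sup_ker hA, isClosed_sup_iff_cosAngle_lt_one]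
end

section
/- Let H be a complex Hilbert space and ι a countable index set. Let {f_i}_{i∈ι} be a frame for H with frame bounds A_F, B_F satisfying B_F/A_F < 2, and let S be its frame operator (positive and invertible). Set α = 2 A_F B_F / (A_F + B_F). Then {f_i}_{i∈ι} and the scaled canonical dual {α S⁻¹ f_i}_{i∈ι} form a woven pair: there exist constants A, B > 0 such that for every σ ⊆ ι and x ∈ H, A‖x‖² ≤ ∑_{i∉σ}|⟪x, f_i⟫|² + ∑_{i∈σ}|⟪x, α S⁻¹ f_i⟫|² ≤ B‖x‖². -/
local notation "⟪" x ", " y "⟫" => @inner ℂ _ _ x y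

set_option maxHeartbeats 4000000 in
/-- **Weaving with the scaled canonical dual (ratio `< 2`).**
If `f` is a frame for `H` with bounds `AF ≤ BF` and `BF / AF < 2`, `S` is its (invertible)
frame operator and `α = 2·AF·BF/(AF + BF)`, then `f` and the scaled canonical dual
`α S⁻¹ f` form a woven pair. -/
theorem woven_scaled_canonical_dual_ratio_lt_two
    {H : Type*} [NormedAddCommGroup H] [InnerProductSpace ℂ H] [CompleteSpace H]
    {ι : Type*} [Countable ι]
    (f : ι → H) (AF BF : ℝ) (hAF : 0 < AF) (hBF : 0 < BF)
    (hframe : ∀ x : H, AF * ‖x‖ ^ 2 ≤ (∑' i : ι, ‖⟪x, f i⟫‖ ^ 2) ∧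
      (∑' i : ι, ‖⟪x, f i⟫‖ ^ 2) ≤ BF * ‖x‖ ^ 2)
    (hratio : BF / AF < 2)
    (S Sinv : H →L[ℂ] H)
    (hS : ∀ x : H, S x = ∑' i : ι, ⟪f i, x⟫ • f i)
    (hSinv : S.comp Sinv = 1 ∧ Sinv.comp S = 1)
    (α : ℝ) (hα : α = 2 * AF * BF / (AF + BF)) :
    ∃ A B : ℝ, 0 < A ∧ 0 < B ∧
      ∀ (σ : Set ι) (x : H),
        A * ‖x‖ ^ 2 ≤
            (∑' i : {j : ι // j ∉ σ}, ‖⟪x, f (i : ι)⟫‖ ^ 2) +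
              ∑' i : {j : ι // j ∈ σ}, ‖⟪x, (α : ℂ) • Sinv (f (i : ι))⟫‖ ^ 2 ∧
          (∑' i : {j : ι // j ∉ σ}, ‖⟪x, f (i : ι)⟫‖ ^ 2) +
              (∑' i : {j : ι // j ∈ σ}, ‖⟪x, (α : ℂ) • Sinv (f (i : ι))⟫‖ ^ 2) ≤
            B * ‖x‖ ^ 2 := by
  classical
  by_cases htriv : ∀ z : H, z = 0
  · exact ⟨1, 1, one_pos, one_pos, fun σ x => by constructor <;> simp [htriv x]⟩
  push_neg at htriv
  obtain ⟨x₀, hx₀⟩ := htriv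
  obtain ⟨hSl, hSr⟩ := hSinv
  have hS_Sinv : ∀ x : H, S (Sinv x) = x := by
    intro x
    have := ContinuousLinearMap.ext_iff.mp hSl x
    simpa using this
  -- basic facts
  have hAB : AF ≤ BF := by
    have h1 := (hframe x₀).1
    have h2 := (hframe x₀).2
    have hx2 : 0 < ‖x₀‖ ^ 2 := by
      have := norm_pos_iff.mpr hx₀
      positivity
    nlinarith
  have hratio' : BF < 2 * AF := by
    rw [div_lt_iff₀ hAF] at hratio; linarith
  have hABpos : 0 < AF + BF := by linarith
  have hαpos : 0 < α := by rw [hα]; positivity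
  -- scalar summability
  have hsum : ∀ x : H, Summable fun i => ‖⟪x, f i⟫‖ ^ 2 := by
    intro x
    by_cases hx : x = 0
    · simpa [hx] using summable_zero
    · by_contra h
      have h0 : (∑' i, ‖⟪x, f i⟫‖ ^ 2) = 0 := tsum_eq_zero_of_not_summable h
      have h1 := (hframe x).1
      rw [h0] at h1
      have hx2 : 0 < ‖x‖ ^ 2 := by
        have := norm_pos_iff.mpr hx
        positivity
      nlinarith
  -- finite Bessel-type bound
  have hfin : ∀ (c : ι → ℂ) (t : Finset ι),
      ‖∑ i ∈ t, c i • f i‖ ^ 2 ≤ BF * ∑ i ∈ t, ‖c i‖ ^ 2 := by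
    intro c t
    set w := ∑ i ∈ t, c i • f i with hw
    have hcs : (∑ i ∈ t, ‖c i‖ * ‖⟪f i, w⟫‖) ^ 2 ≤
        (∑ i ∈ t, ‖c i‖ ^ 2) * ∑ i ∈ t, ‖⟪f i, w⟫‖ ^ 2 :=
      Finset.sum_mul_sq_le_sq_mul_sq t _ _
    have hbess : ∑ i ∈ t, ‖⟪f i, w⟫‖ ^ 2 ≤ BF * ‖w‖ ^ 2 := by
      have h1 : ∑ i ∈ t, ‖⟪f i, w⟫‖ ^ 2 = ∑ i ∈ t, ‖⟪w, f i⟫‖ ^ 2 :=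
        Finset.sum_congr rfl fun i _ => by rw [norm_inner_symm]
      rw [h1]
      exact le_trans (Summable.sum_le_tsum t (fun i _ => by positivity) (hsum w)) (hframe w).2
    have hwsq : ‖w‖ ^ 2 ≤ ∑ i ∈ t, ‖c i‖ * ‖⟪f i, w⟫‖ := by
      have h1 : (‖w‖ ^ 2 : ℝ) = RCLike.re (⟪w, w⟫) := (inner_self_eq_norm_sq (𝕜 := ℂ) w).symm
      have h2 : ⟪w, w⟫ = ∑ i ∈ t, (starRingEnd ℂ) (c i) * ⟪f i, w⟫ := by
        rw [hw, sum_inner]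
        exact Finset.sum_congr rfl fun i _ => inner_smul_left _ _ _
      rw [h1, h2]
      calc RCLike.re (∑ i ∈ t, (starRingEnd ℂ) (c i) * ⟪f i, w⟫)
          ≤ ‖∑ i ∈ t, (starRingEnd ℂ) (c i) * ⟪f i, w⟫‖ := RCLike.re_le_norm _
        _ ≤ ∑ i ∈ t, ‖(starRingEnd ℂ) (c i) * ⟪f i, w⟫‖ := norm_sum_le _ _
        _ = ∑ i ∈ t, ‖c i‖ * ‖⟪f i, w⟫‖ := by
            exact Finset.sum_congr rfl fun i _ => by rw [norm_mul, RCLike.norm_conj]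
    have hP : (0:ℝ) ≤ ∑ i ∈ t, ‖c i‖ ^ 2 := Finset.sum_nonneg fun i _ => by positivity
    rcases eq_or_lt_of_le (norm_nonneg w) with h0 | h0
    · rw [← h0]; nlinarith [hP]
    · have h4 : (‖w‖ ^ 2) ^ 2 ≤ (∑ i ∈ t, ‖c i‖ ^ 2) * (BF * ‖w‖ ^ 2) := by
        calc (‖w‖ ^ 2) ^ 2 ≤ (∑ i ∈ t, ‖c i‖ * ‖⟪f i, w⟫‖) ^ 2 := by
              have := hwsq; nlinarith [norm_nonneg w]
          _ ≤ (∑ i ∈ t, ‖c i‖ ^ 2) * ∑ i ∈ t, ‖⟪f i, w⟫‖ ^ 2 := hcs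
          _ ≤ (∑ i ∈ t, ‖c i‖ ^ 2) * (BF * ‖w‖ ^ 2) := by
              exact mul_le_mul_of_nonneg_left hbess hP
      have hw2 : 0 < ‖w‖ ^ 2 := by positivity
      nlinarith
  -- summability of the vector series
  have hvec : ∀ x : H, Summable fun i => ⟪f i, x⟫ • f i := by
    intro x
    rw [summable_iff_vanishing]
    intro e he
    obtain ⟨ε, hε, hball⟩ := Metric.mem_nhds_iff.mp he
    have hδ : 0 < ε ^ 2 / (BF + 1) := by positivity
    obtain ⟨s, hs⟩ := (hsum x).vanishing (Metric.ball_mem_nhds 0 hδ)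
    refine ⟨s, fun t ht => hball ?_⟩
    rw [Metric.mem_ball, dist_zero_right]
    have h1 := hfin (fun i => ⟪f i, x⟫) t
    have h2 : ∑ i ∈ t, ‖⟪f i, x⟫‖ ^ 2 = ∑ i ∈ t, ‖⟪x, f i⟫‖ ^ 2 :=
      Finset.sum_congr rfl fun i _ => by rw [norm_inner_symm]
    have h3 := hs t ht
    rw [Metric.mem_ball, dist_zero_right, Real.norm_eq_abs,
      abs_of_nonneg (Finset.sum_nonneg fun i _ => by positivity)] at h3
    rw [h2] at h1
    set w := ∑ i ∈ t, ⟪f i, x⟫ • f i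
    have h4 : ‖w‖ ^ 2 < ε ^ 2 := by
      calc ‖w‖ ^ 2 ≤ BF * ∑ i ∈ t, ‖⟪x, f i⟫‖ ^ 2 := h1
        _ < BF * (ε ^ 2 / (BF + 1)) := by exact (mul_lt_mul_iff_right₀ hBF).mpr h3
        _ ≤ ε ^ 2 := by
            rw [mul_div_assoc']
            rw [div_le_iff₀ (by linarith)]
            nlinarith
    by_contra hcon
    push_neg at hcon
    nlinarith [norm_nonneg w]
  -- the swap identity
  have hswap : ∀ u v : H, ⟪u, S v⟫ = ∑' i, ⟪f i, v⟫ * ⟪u, f i⟫ := by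
    intro u v
    rw [hS v]
    simpa using (innerSL ℂ u).map_tsum (hvec v)
  -- quadratic form
  have hquad : ∀ v : H, ⟪v, S v⟫ = ((∑' i, ‖⟪v, f i⟫‖ ^ 2 : ℝ) : ℂ) := by
    intro v
    rw [hswap v v, Complex.ofReal_tsum]
    refine tsum_congr fun i => ?_
    rw [← inner_conj_symm (f i) v, RCLike.conj_mul]
    norm_cast
  have hre : ∀ v : H, (⟪v, S v⟫).re = ∑' i, ‖⟪v, f i⟫‖ ^ 2 := fun v => by
    rw [hquad v, Complex.ofReal_re]
  -- symmetry
  have hsym : ∀ u v : H, ⟪S u, v⟫ = ⟪u, S v⟫ := by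
    intro u v
    rw [← inner_conj_symm (S u) v, hswap v u, hswap u v, starRingEnd_apply, tsum_star]
    refine tsum_congr fun i => ?_
    rw [← starRingEnd_apply, map_mul, inner_conj_symm, inner_conj_symm]
    ring
  have hsyminv : ∀ u v : H, ⟪Sinv u, v⟫ = ⟪u, Sinv v⟫ := by
    intro u v
    conv_lhs => rw [← hS_Sinv v]
    rw [← hsym (Sinv u) (Sinv v), hS_Sinv u]
  -- positivity bounds of the form re ⟪u, S u - AF • u⟫
  have hP0 : ∀ u : H, 0 ≤ (⟪u, S u - (AF:ℂ) • u⟫).re := by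
    intro u
    rw [inner_sub_right, Complex.sub_re, hre u, inner_smul_right]
    have h5 : (⟪u, u⟫).re = ‖u‖ ^ 2 := inner_self_eq_norm_sq (𝕜 := ℂ) u
    have : ((AF:ℂ) * ⟪u, u⟫).re = AF * ‖u‖ ^ 2 := by
      rw [Complex.re_ofReal_mul, h5]
    rw [this]
    linarith [(hframe u).1]
  have hPB : ∀ u : H, (⟪u, S u - (AF:ℂ) • u⟫).re ≤ (BF - AF) * ‖u‖ ^ 2 := by
    intro u
    rw [inner_sub_right, Complex.sub_re, hre u, inner_smul_right]
    have h5 : (⟪u, u⟫).re = ‖u‖ ^ 2 := inner_self_eq_norm_sq (𝕜 := ℂ) u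
    have : ((AF:ℂ) * ⟪u, u⟫).re = AF * ‖u‖ ^ 2 := by
      rw [Complex.re_ofReal_mul, h5]
    rw [this]
    linarith [(hframe u).2]
  have hPsym : ∀ u w : H, ⟪S u - (AF:ℂ) • u, w⟫ = ⟪u, S w - (AF:ℂ) • w⟫ := by
    intro u w
    rw [inner_sub_left, inner_sub_right, hsym u w, inner_smul_left, inner_smul_right,
      Complex.conj_ofReal]
  -- the key operator inequality
  have hkey : ∀ v : H, ‖S v - (AF:ℂ) • v‖ ^ 2 ≤ (BF - AF) * (⟪v, S v - (AF:ℂ) • v⟫).re := by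
    intro v
    set p := S v - (AF:ℂ) • v with hp
    set a := (⟪v, p⟫).re with ha
    set s := ‖p‖ ^ 2 with hsdef
    set d := (⟪p, S p - (AF:ℂ) • p⟫).re with hd
    have ha0 : 0 ≤ a := hP0 v
    have hd0 : 0 ≤ d := hP0 p
    have hs0 : 0 ≤ s := by positivity
    have hdB : d ≤ (BF - AF) * s := hPB p
    have hq : ∀ t : ℝ, 0 ≤ a + 2 * t * s + t ^ 2 * d := by
      intro t
      have h := hP0 (v + (t:ℂ) • p)
      have e1 : S (v + (t:ℂ) • p) - (AF:ℂ) • (v + (t:ℂ) • p)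
          = p + (t:ℂ) • (S p - (AF:ℂ) • p) := by
        rw [map_add, map_smul, hp]
        module
      rw [e1] at h
      have e3 : ⟪v, S p - (AF:ℂ) • p⟫ = ⟪p, p⟫ := by
        rw [← hPsym v p, hp]
      have e2 : ⟪v + (t:ℂ) • p, p + (t:ℂ) • (S p - (AF:ℂ) • p)⟫
          = ⟪v, p⟫ + ((2 * t : ℝ) : ℂ) * ⟪p, p⟫
            + ((t ^ 2 : ℝ) : ℂ) * ⟪p, S p - (AF:ℂ) • p⟫ := by
        rw [inner_add_left, inner_add_right, inner_add_right, inner_smul_left,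
          inner_smul_right, inner_smul_left, inner_smul_right, Complex.conj_ofReal, e3]
        push_cast
        ring
      rw [e2] at h
      have e4 : (⟪p, p⟫).re = s := inner_self_eq_norm_sq (𝕜 := ℂ) p
      simp only [Complex.add_re, Complex.re_ofReal_mul] at h
      rw [e4] at h
      nlinarith [h]
    -- conclude s ≤ (BF - AF) * a
    rcases eq_or_lt_of_le hs0 with h0 | h0
    · rw [← h0]
      exact mul_nonneg (sub_nonneg.mpr hAB) ha0
    · rcases eq_or_lt_of_le (sub_nonneg.mpr hAB) with hBA | hBA
      · -- BF = AF : then d = 0, contradiction with hq since s > 0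
        exfalso
        have hd' : d = 0 := le_antisymm (by nlinarith) hd0
        have hsne : s ≠ 0 := ne_of_gt h0
        have hq' := hq (-(a + 1) / (2 * s))
        rw [hd'] at hq'
        have ht : 2 * (-(a + 1) / (2 * s)) * s = -(a + 1) := by
          field_simp
        rw [ht] at hq'
        nlinarith [hq']
      · -- BF > AF
        have hBA' : 0 < BF - AF := hBA
        have hq' := hq (-(1 / (BF - AF)))
        have hd2 : d * (1 / (BF - AF)) ^ 2 ≤ s * (1 / (BF - AF)) := by
          rw [div_pow, one_pow, mul_one_div, mul_one_div,
            div_le_div_iff₀ (by positivity) hBA']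
          nlinarith
        have ha' : s * (1 / (BF - AF)) ≤ a := by nlinarith [hq', hd2]
        have heq : (BF - AF) * (s * (1 / (BF - AF))) = s := by field_simp
        nlinarith [mul_le_mul_of_nonneg_left ha' hBA'.le, heq]
  -- general expansion of the square of a norm of a difference
  have expand : ∀ u z : H, ‖u - z‖ ^ 2 = ‖u‖ ^ 2 - 2 * (⟪u, z⟫).re + ‖z‖ ^ 2 := by
    intro u z
    have h1 : (‖u - z‖ ^ 2 : ℝ) = (⟪u - z, u - z⟫).re :=
      (inner_self_eq_norm_sq (𝕜 := ℂ) _).symm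
    have h2 : (⟪u, u⟫).re = ‖u‖ ^ 2 := inner_self_eq_norm_sq (𝕜 := ℂ) u
    have h3 : (⟪z, z⟫).re = ‖z‖ ^ 2 := inner_self_eq_norm_sq (𝕜 := ℂ) z
    have h4 : (⟪z, u⟫).re = (⟪u, z⟫).re := by
      rw [← inner_conj_symm u z, Complex.conj_re]
    rw [h1, inner_sub_left, inner_sub_right, inner_sub_right]
    simp only [Complex.sub_re]
    rw [h2, h3, h4]
    ring
  -- the perturbation estimate
  set μ : ℝ := (BF - AF) / (AF + BF) with hμ
  have hμ1 : μ ^ 2 ≤ 1 := by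
    rw [hμ, div_pow, div_le_one (by positivity)]
    nlinarith
  have key2 : ∀ x : H, ‖x - (α:ℂ) • Sinv x‖ ^ 2 ≤ μ ^ 2 * ‖x‖ ^ 2 := by
    intro x
    set w := Sinv x with hw
    have hxw : S w = x := hS_Sinv x
    have hk := hkey w
    rw [hxw] at hk
    set T := (⟪x, w⟫).re with hT
    set n := ‖w‖ ^ 2 with hn
    set s := ‖x‖ ^ 2 with hs
    have hwx : (⟪w, x⟫).re = T := by
      rw [hT, ← inner_conj_symm x w, Complex.conj_re]
    have hsm : ∀ r : ℝ, ‖(r:ℂ) • w‖ ^ 2 = r ^ 2 * n := by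
      intro r
      rw [norm_smul, Complex.norm_real, mul_pow, hn, Real.norm_eq_abs, sq_abs]
    have hsm2 : ∀ r : ℝ, (⟪x, (r:ℂ) • w⟫).re = r * T := by
      intro r
      rw [inner_smul_right, Complex.re_ofReal_mul, hT]
    have e1 : ‖x - (AF:ℂ) • w‖ ^ 2 = s - 2 * (AF * T) + AF ^ 2 * n := by
      rw [expand x ((AF:ℂ) • w), hsm2 AF, hsm AF, hs]
    have e2 : ‖x - (α:ℂ) • w‖ ^ 2 = s - 2 * (α * T) + α ^ 2 * n := by
      rw [expand x ((α:ℂ) • w), hsm2 α, hsm α, hs]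
    have e3 : (⟪w, x - (AF:ℂ) • w⟫).re = T - AF * n := by
      rw [inner_sub_right, Complex.sub_re, hwx, inner_smul_right,
        Complex.re_ofReal_mul]
      have : (⟪w, w⟫).re = n := inner_self_eq_norm_sq (𝕜 := ℂ) w
      rw [this]
    have hI : s ≤ (AF + BF) * T - AF * BF * n := by
      rw [e1, e3] at hk
      nlinarith [hk]
    have hid : (1 - μ ^ 2) * ((AF + BF) * T - AF * BF * n) = 2 * (α * T) - α ^ 2 * n := by
      rw [hμ, hα]
      field_simp
      ring
    rw [e2]
    nlinarith [mul_le_mul_of_nonneg_left hI (by linarith [hμ1] : (0:ℝ) ≤ 1 - μ ^ 2), hid]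
  -- constants
  set D : ℝ := AF - BF * μ ^ 2 with hDdef
  have hD : 0 < D := by
    have hμ2 : μ ^ 2 = (BF - AF) ^ 2 / (AF + BF) ^ 2 := by rw [hμ, div_pow]
    have h9 : BF * μ ^ 2 < AF := by
      rw [hμ2, mul_div_assoc', div_lt_iff₀ (by positivity)]
      nlinarith [mul_lt_mul_of_pos_right hratio' (mul_pos hBF hBF), mul_pos hAF hBF,
        mul_pos (mul_pos hAF hAF) hBF, mul_pos (mul_pos hAF hAF) hAF,
        mul_pos (mul_pos hAF hBF) hBF]
    rw [hDdef]
    linarith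
  set ε' : ℝ := D / (2 * (BF * μ ^ 2 + 1)) with hε'def
  set ε : ℝ := (2 * (BF * μ ^ 2 + 1)) / D with hεdef
  have hμ2nn : (0:ℝ) ≤ BF * μ ^ 2 := by positivity
  have hε'pos : 0 < ε' := by rw [hε'def]; positivity
  have hεpos : 0 < ε := by rw [hεdef]; positivity
  have hεε' : ε * ε' = 1 := by
    rw [hεdef, hε'def]
    field_simp
  have h5 : ε' * (BF * μ ^ 2) ≤ D / 2 := by
    rw [hε'def, div_mul_eq_mul_div, div_le_div_iff₀ (by positivity) two_pos]
    nlinarith [hD.le]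
  refine ⟨D / (2 * (1 + ε)), BF * (1 + (α * ‖Sinv‖) ^ 2) + 1, by positivity, by positivity, ?_⟩
  intro σ x
  have hs0 : (0:ℝ) ≤ ‖x‖ ^ 2 := by positivity
  set y := (α:ℂ) • Sinv x with hy
  have hyn : ‖y‖ ≤ α * (‖Sinv‖ * ‖x‖) := by
    rw [hy, norm_smul, Complex.norm_real, Real.norm_eq_abs, abs_of_pos hαpos]
    exact mul_le_mul_of_nonneg_left (Sinv.le_opNorm x) hαpos.le
  have hdual : ∀ i : ι, ⟪x, (α : ℂ) • Sinv (f i)⟫ = ⟪y, f i⟫ := by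
    intro i
    rw [inner_smul_right, hy, inner_smul_left, Complex.conj_ofReal, hsyminv x (f i)]
  set m : ι → ℝ := fun i => if i ∈ σ then ‖⟪y, f i⟫‖ ^ 2 else ‖⟪x, f i⟫‖ ^ 2 with hm
  have hm0 : ∀ i, 0 ≤ m i := fun i => by
    rw [hm]; dsimp only; split <;> positivity
  have hmle : ∀ i, m i ≤ ‖⟪x, f i⟫‖ ^ 2 + ‖⟪y, f i⟫‖ ^ 2 := fun i => by
    rw [hm]; dsimp only
    split
    · nlinarith [sq_nonneg ‖⟪x, f i⟫‖]
    · nlinarith [sq_nonneg ‖⟪y, f i⟫‖]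
  have hmsum : Summable m :=
    Summable.of_nonneg_of_le hm0 hmle ((hsum x).add (hsum y))
  set M := ∑' i, m i with hM
  have hM0 : 0 ≤ M := tsum_nonneg hm0
  have hsplit : (∑' i : {j : ι // j ∉ σ}, ‖⟪x, f (i : ι)⟫‖ ^ 2)
      + (∑' i : {j : ι // j ∈ σ}, ‖⟪y, f (i : ι)⟫‖ ^ 2) = M := by
    have e1 : (∑' i : {j : ι // j ∉ σ}, ‖⟪x, f (i : ι)⟫‖ ^ 2)
        = ∑' i, ({j : ι | j ∉ σ}).indicator (fun i => ‖⟪x, f i⟫‖ ^ 2) i :=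
      by exact tsum_subtype {j : ι | j ∉ σ} (fun i => ‖⟪x, f i⟫‖ ^ 2)
    have e2 : (∑' i : {j : ι // j ∈ σ}, ‖⟪y, f (i : ι)⟫‖ ^ 2)
        = ∑' i, ({j : ι | j ∈ σ}).indicator (fun i => ‖⟪y, f i⟫‖ ^ 2) i :=
      by exact tsum_subtype {j : ι | j ∈ σ} (fun i => ‖⟪y, f i⟫‖ ^ 2)
    rw [e1, e2, ← Summable.tsum_add ((hsum x).indicator _) ((hsum y).indicator _)]
    refine tsum_congr fun i => ?_
    by_cases hi : i ∈ σ
    · rw [Set.indicator_of_notMem (by simp [hi]), Set.indicator_of_mem (by simp [hi]), hm]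
      simp [hi]
    · rw [Set.indicator_of_mem (by simp [hi]), Set.indicator_of_notMem (by simp [hi]), hm]
      simp [hi]
  have hgoal2 : (∑' i : {j : ι // j ∈ σ}, ‖⟪x, (α : ℂ) • Sinv (f (i : ι))⟫‖ ^ 2)
      = ∑' i : {j : ι // j ∈ σ}, ‖⟪y, f (i : ι)⟫‖ ^ 2 :=
    tsum_congr fun i => by rw [hdual]
  constructor
  · -- lower bound
    rw [hgoal2, hsplit]
    have hkd : ‖x - y‖ ^ 2 ≤ μ ^ 2 * ‖x‖ ^ 2 := by rw [hy]; exact key2 x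
    have hpt : ∀ i, ‖⟪x, f i⟫‖ ^ 2 ≤ (1 + ε) * m i + (1 + ε') * ‖⟪x - y, f i⟫‖ ^ 2 := by
      intro i
      rw [hm]; dsimp only
      by_cases hi : i ∈ σ
      · rw [if_pos hi]
        have htri : ‖⟪x, f i⟫‖ ≤ ‖⟪y, f i⟫‖ + ‖⟪x - y, f i⟫‖ := by
          have hxyd : ⟪x, f i⟫ = ⟪y, f i⟫ + ⟪x - y, f i⟫ := by
            rw [← inner_add_left]
            congr 1
            abel
          rw [hxyd]
          exact norm_add_le _ _
        have hkey2 : 0 ≤ ε * ‖⟪y, f i⟫‖ ^ 2 - 2 * (‖⟪y, f i⟫‖ * ‖⟪x - y, f i⟫‖)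
            + ε' * ‖⟪x - y, f i⟫‖ ^ 2 := by
          calc (0:ℝ) ≤ ε' * (ε * ‖⟪y, f i⟫‖ - ‖⟪x - y, f i⟫‖) ^ 2 :=
                mul_nonneg hε'pos.le (sq_nonneg _)
            _ = (ε * ε') * (ε * ‖⟪y, f i⟫‖ ^ 2) - 2 * ((ε * ε') * (‖⟪y, f i⟫‖ * ‖⟪x - y, f i⟫‖))
                + ε' * ‖⟪x - y, f i⟫‖ ^ 2 := by ring
            _ = ε * ‖⟪y, f i⟫‖ ^ 2 - 2 * (‖⟪y, f i⟫‖ * ‖⟪x - y, f i⟫‖)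
                + ε' * ‖⟪x - y, f i⟫‖ ^ 2 := by rw [hεε']; ring
        have hsq : ‖⟪x, f i⟫‖ ^ 2 ≤ (‖⟪y, f i⟫‖ + ‖⟪x - y, f i⟫‖) ^ 2 := by
          nlinarith [htri, norm_nonneg (⟪x, f i⟫)]
        nlinarith [hkey2, hsq]
      · rw [if_neg hi]
        nlinarith [sq_nonneg ‖⟪x - y, f i⟫‖, sq_nonneg ‖⟪x, f i⟫‖, hεpos.le, hε'pos.le]
    have hsum_le : (∑' i, ‖⟪x, f i⟫‖ ^ 2)
        ≤ (1 + ε) * M + (1 + ε') * ∑' i, ‖⟪x - y, f i⟫‖ ^ 2 := by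
      have h7 := Summable.tsum_le_tsum hpt (hsum x)
        ((hmsum.mul_left _).add ((hsum (x - y)).mul_left _))
      rwa [Summable.tsum_add (hmsum.mul_left _) ((hsum (x - y)).mul_left _),
        tsum_mul_left, tsum_mul_left] at h7
    have hFd : (∑' i, ‖⟪x - y, f i⟫‖ ^ 2) ≤ BF * (μ ^ 2 * ‖x‖ ^ 2) :=
      le_trans (hframe (x - y)).2 (by nlinarith [hkd, hBF.le])
    have hAx := (hframe x).1
    have h6 : (D / 2) * ‖x‖ ^ 2 ≤ (1 + ε) * M := by
      nlinarith [mul_le_mul_of_nonneg_right h5 hs0, hsum_le, hFd, hAx, hε'pos.le, hDdef]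
    have hden : (0:ℝ) < 2 * (1 + ε) := by linarith
    rw [div_mul_eq_mul_div, div_le_iff₀ hden]
    nlinarith [h6]
  · -- upper bound
    rw [hgoal2, hsplit]
    have hup : M ≤ BF * ‖x‖ ^ 2 + BF * ‖y‖ ^ 2 := by
      have h1 := Summable.tsum_le_tsum hmle hmsum ((hsum x).add (hsum y))
      rw [Summable.tsum_add (hsum x) (hsum y)] at h1
      exact le_trans h1 (add_le_add (hframe x).2 (hframe y).2)
    have hy2 : ‖y‖ ^ 2 ≤ (α * (‖Sinv‖ * ‖x‖)) ^ 2 :=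
      pow_le_pow_left₀ (norm_nonneg y) hyn 2
    nlinarith [hup, hy2, hBF.le, hs0]
end

section
/- Let H be a complex Hilbert space, let 0 < A ≤ B be real numbers, and let S : H → H be a self-adjoint bounded operator with A·Id ≤ S ≤ B·Id (in the ordering of self-adjoint operators). Then S is invertible, and for every real α, ‖(S − α·Id) S⁻¹ (S − α·Id)‖ ≤ max{ (A − α)²/A , (B − α)²/B }. -/
local notation "⟪" x ", " y "⟫" => @inner ℂ _ _ x y

/-! The bounds on the quadratic form say `A ≤ S ≤ B` in the Loewner order, so the spectrum of `S`
lies in `[A, B] ⊆ (0, ∞)` and `S` is invertible. By the continuous functional calculus,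
`(S - α) S⁻¹ (S - α) = f(S)` with `f t = (t - α)² / t`, whose norm is at most the supremum of `|f|`
on the spectrum; `f` is convex on `(0, ∞)`, so on `[A, B]` it is maximal at an endpoint. -/

lemma sq_sub_div_le_max {A B t : ℝ} (α : ℝ) (hA : 0 < A) (ht : t ∈ Set.Icc A B) :
    (t - α) ^ 2 / t ≤ max ((A - α) ^ 2 / A) ((B - α) ^ 2 / B) := by
  obtain ⟨hAt, htB⟩ := ht
  have ht0 : 0 < t := hA.trans_le hAt
  -- `(t - α)² / t - (s - α)² / s = (t - s) (1 - α² / (t s))`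
  rcases le_total (α ^ 2) (A * B) with hα | hα
  · refine le_max_of_le_right ?_
    rw [div_le_div_iff₀ ht0 (ht0.trans_le htB)]
    have : 0 ≤ (B - t) * (B * t - α ^ 2) := mul_nonneg (by linarith) (by nlinarith)
    nlinarith
  · refine le_max_of_le_left ?_
    rw [div_le_div_iff₀ ht0 hA]
    have : 0 ≤ (t - A) * (α ^ 2 - A * t) := mul_nonneg (by linarith) (by nlinarith)
    nlinarith

lemma isUnit_of_spectrum_subset_Ici {𝔹 : Type*} [Ring 𝔹] [Algebra ℝ 𝔹] {a : 𝔹} {A : ℝ}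
    (hA : 0 < A) (ha : spectrum ℝ a ⊆ Set.Ici A) : IsUnit a :=
  (spectrum.zero_notMem_iff ℝ).mp fun h0 => (ha h0).not_gt hA

section CStarAlgebra

variable {𝔸 : Type*} [CStarAlgebra 𝔸]

lemma spectrum_subset_Icc_of_le_of_le [PartialOrder 𝔸] [StarOrderedRing 𝔸] {a : 𝔸}
    (ha : IsSelfAdjoint a) {A B : ℝ} (hAa : algebraMap ℝ 𝔸 A ≤ a) (haB : a ≤ algebraMap ℝ 𝔸 B) :
    spectrum ℝ a ⊆ Set.Icc A B := fun t ht =>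
  ⟨(algebraMap_le_iff_le_spectrum ha).mp hAa t ht, (le_algebraMap_iff_spectrum_le ha).mp haB t ht⟩

lemma sub_mul_ringInverse_mul_sub_eq_cfc {a : 𝔸} (ha : IsSelfAdjoint a) (hunit : IsUnit a)
    (α : ℝ) :
    (a - algebraMap ℝ 𝔸 α) * Ring.inverse a * (a - algebraMap ℝ 𝔸 α) =
      cfc (fun t : ℝ => (t - α) ^ 2 / t) a := by
  have hne : ∀ t ∈ spectrum ℝ a, t ≠ 0 := fun _ ht =>
    ne_of_mem_of_not_mem ht (spectrum.zero_notMem ℝ hunit)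
  have hsub : a - algebraMap ℝ 𝔸 α = cfc (fun t : ℝ => t - α) a := by
    rw [cfc_sub .., cfc_id' .., cfc_const ..]
  rw [hsub, ← cfc_ringInverse_id (R := ℝ) a hunit, ← cfc_mul .., ← cfc_mul ..]
  exact cfc_congr fun t ht => by field_simp [hne t ht]

theorem norm_sub_mul_ringInverse_mul_sub_le {a : 𝔸} (ha : IsSelfAdjoint a) {A B : ℝ} (hA : 0 < A)
    (hspec : spectrum ℝ a ⊆ Set.Icc A B) (α : ℝ) :
    ‖(a - algebraMap ℝ 𝔸 α) * Ring.inverse a * (a - algebraMap ℝ 𝔸 α)‖ ≤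
      max ((A - α) ^ 2 / A) ((B - α) ^ 2 / B) := by
  have hunit := isUnit_of_spectrum_subset_Ici hA (hspec.trans Set.Icc_subset_Ici_self)
  rw [sub_mul_ringInverse_mul_sub_eq_cfc ha hunit]
  refine norm_cfc_le (le_max_of_le_left (by positivity)) fun t ht => ?_
  have ht0 : 0 < t := hA.trans_le (hspec ht).1
  rw [Real.norm_of_nonneg (by positivity)]
  exact sq_sub_div_le_max α hA (hspec ht)

end CStarAlgebra

namespace ContinuousLinearMap

variable {H : Type*} [NormedAddCommGroup H] [InnerProductSpace ℂ H]

lemma le_iff_re_inner_le [CompleteSpace H] {S T : H →L[ℂ] H} (hS : IsSelfAdjoint S)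
    (hT : IsSelfAdjoint T) :
    S ≤ T ↔ ∀ x, (⟪x, S x⟫).re ≤ (⟪x, T x⟫).re := by
  rw [le_def, isPositive_def]
  simp only [(hT.sub hS).isSymmetric, true_and, reApplyInnerSelf_apply, sub_apply, inner_sub_left,
    map_sub, sub_nonneg]
  exact forall_congr' fun x => by rw [inner_re_symm, inner_re_symm (𝕜 := ℂ) (T x)]; rfl

lemma re_inner_algebraMap_apply (r : ℝ) (x : H) :
    (⟪x, algebraMap ℝ (H →L[ℂ] H) r x⟫).re = r * ‖x‖ ^ 2 := by
  simp [inner_self_eq_norm_sq_to_K, ← Complex.ofReal_pow]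

end ContinuousLinearMap

open ContinuousLinearMap in
theorem norm_conj_inv_le_max_general
    {H : Type*} [NormedAddCommGroup H] [InnerProductSpace ℂ H] [CompleteSpace H]
    (S : H →L[ℂ] H) (hS : IsSelfAdjoint S) (A B : ℝ) (hA : 0 < A)
    (hlow : ∀ x : H, A * ‖x‖ ^ 2 ≤ (⟪x, S x⟫).re)
    (hup : ∀ x : H, (⟪x, S x⟫).re ≤ B * ‖x‖ ^ 2) :
    ∃ Sinv : H →L[ℂ] H, S.comp Sinv = 1 ∧ Sinv.comp S = 1 ∧
      ∀ α : ℝ,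
        ‖(S - (α : ℂ) • (1 : H →L[ℂ] H)).comp
            (Sinv.comp (S - (α : ℂ) • (1 : H →L[ℂ] H)))‖ ≤
          max ((A - α) ^ 2 / A) ((B - α) ^ 2 / B) := by
  have hAS : algebraMap ℝ (H →L[ℂ] H) A ≤ S :=
    (le_iff_re_inner_le (.algebraMap _ (.all A)) hS).mpr fun x => by
      simpa only [re_inner_algebraMap_apply] using hlow x
  have hSB : S ≤ algebraMap ℝ (H →L[ℂ] H) B :=
    (le_iff_re_inner_le hS (.algebraMap _ (.all B))).mpr fun x => by
      simpa only [re_inner_algebraMap_apply] using hup x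
  have hspec := spectrum_subset_Icc_of_le_of_le hS hAS hSB
  have hunit := isUnit_of_spectrum_subset_Ici hA (hspec.trans Set.Icc_subset_Ici_self)
  refine ⟨Ring.inverse S, Ring.mul_inverse_cancel S hunit, Ring.inverse_mul_cancel S hunit,
    fun α => ?_⟩
  have hα : (α : ℂ) • (1 : H →L[ℂ] H) = algebraMap ℝ (H →L[ℂ] H) α := by
    rw [Algebra.algebraMap_eq_smul_one, Complex.coe_smul]
  rw [hα, ← mul_def, ← mul_def, ← mul_assoc]
  exact norm_sub_mul_ringInverse_mul_sub_le hS hA hspec α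

/-- If `S` is a self-adjoint bounded operator on a complex Hilbert space with
`A·Id ≤ S ≤ B·Id` for some reals `0 < A ≤ B`, then `S` is invertible and for every real `α`,
`‖(S − α·Id) S⁻¹ (S − α·Id)‖ ≤ max {(A − α)²/A, (B − α)²/B}`. -/
theorem norm_conj_inv_le_max
    {H : Type*} [NormedAddCommGroup H] [InnerProductSpace ℂ H] [CompleteSpace H]
    (S : H →L[ℂ] H) (hS : IsSelfAdjoint S) (A B : ℝ) (hA : 0 < A) (hAB : A ≤ B)
    (hlow : ∀ x : H, A * ‖x‖ ^ 2 ≤ (⟪x, S x⟫).re)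
    (hup : ∀ x : H, (⟪x, S x⟫).re ≤ B * ‖x‖ ^ 2) :
    ∃ Sinv : H →L[ℂ] H, S.comp Sinv = 1 ∧ Sinv.comp S = 1 ∧
      ∀ α : ℝ,
        ‖(S - (α : ℂ) • (1 : H →L[ℂ] H)).comp
            (Sinv.comp (S - (α : ℂ) • (1 : H →L[ℂ] H)))‖ ≤
          max ((A - α) ^ 2 / A) ((B - α) ^ 2 / B) :=
  norm_conj_inv_le_max_general S hS A B hA hlow hup
end
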